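/- arXiv:1905.05679 — 10 statements merged into one kernel-verified Lean document; each statement's English description precedes it below -/
import Mathlib

section
/- Let d, n, k be positive integers, let x_1, …, x_n ∈ ℝ^d with labels y_1, …, y_n ∈ ℝ, let ℓ* ∈ ℝ^d, and let I ⊆ {1, …, n} be nonempty with y_i = ⟨x_i, ℓ*⟩ for every i ∈ I. Let 0 < α ≤ 1 and assume the inliers are α-anti-concentrated: for every nonzero v ∈ ℝ^d, |{i ∈ I : ⟨x_i, v⟩ = 0}| < α·|I|. Suppose S_1, …, S_k is a partition of {1, …, n} with |S_j| ≥ α·n for every j, and there exist vectors ℓ_1, …, ℓ_k ∈ ℝ^d with y_i = ⟨x_i, ℓ_j⟩ for every j and every i ∈ S_j. Then there exists j with ℓ_j = ℓ*. -/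
open scoped Classical

/-!
Since the `S j` have size at least `α n` and partition the `n` samples, a weighted pigeonhole
argument gives a part `S j` containing at least an `α` fraction of the inliers `I`. On `I ∩ S j`
both `ℓ j` and `ℓstar` fit the labels, so `ℓ j - ℓstar` is orthogonal to too many inliers to be
nonzero, by anti-concentration.
-/

open Finset RealInnerProductSpace

section Partition

variable {ι β : Type*} [Fintype ι] [Fintype β] [DecidableEq β]

theorem sum_card_inter_of_biUnion_eq_univ {S : ι → Finset β}
    (hdisj : Pairwise fun j j' => Disjoint (S j) (S j')) (hcover : univ.biUnion S = univ)
    (I : Finset β) : ∑ j, #(I ∩ S j) = #I := by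
  rw [← card_biUnion fun j _ j' _ hjj' =>
    (hdisj hjj').mono inter_subset_right inter_subset_right, ← inter_biUnion, hcover, inter_univ]

theorem exists_card_mul_le_card_inter_mul [Nonempty ι] {S : ι → Finset β}
    (hdisj : Pairwise fun j j' => Disjoint (S j) (S j')) (hcover : univ.biUnion S = univ)
    (I : Finset β) : ∃ j, #(S j) * #I ≤ #(I ∩ S j) * Fintype.card β := by
  have hsizes : ∑ j, #(S j) = Fintype.card β := by
    simpa using sum_card_inter_of_biUnion_eq_univ hdisj hcover univ
  have hsum : ∑ j, #(S j) * #I ≤ ∑ j, #(I ∩ S j) * Fintype.card β := by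
    rw [← sum_mul, ← sum_mul, hsizes, sum_card_inter_of_biUnion_eq_univ hdisj hcover, mul_comm]
  simpa using exists_le_of_sum_le univ_nonempty hsum

end Partition

section AntiConcentration

variable {ι E : Type*} [NormedAddCommGroup E] [InnerProductSpace ℝ E]

def IsAntiConcentrated (x : ι → E) (I : Finset ι) (δ : ℝ) : Prop :=
  ∀ v : E, v ≠ 0 → (#(I.filter fun i => ⟪x i, v⟫ = 0) : ℝ) < δ * #I

theorem IsAntiConcentrated.eq_of_inner_eq {x : ι → E} {I J : Finset ι} {δ : ℝ}
    (hx : IsAntiConcentrated x I δ) (hJI : J ⊆ I) (hJ : δ * #I ≤ #J) {u w : E}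
    (huw : ∀ i ∈ J, ⟪x i, u⟫ = ⟪x i, w⟫) : u = w := by
  by_contra hne
  have hsub : J ⊆ I.filter fun i => ⟪x i, u - w⟫ = 0 := fun i hi =>
    mem_filter.mpr ⟨hJI hi, by rw [inner_sub_right, huw i hi, sub_self]⟩
  have hcard : (#J : ℝ) ≤ #(I.filter fun i => ⟪x i, u - w⟫ = 0) := by
    exact_mod_cast card_le_card hsub
  linarith [hx (u - w) (sub_ne_zero.mpr hne)]

end AntiConcentration

theorem stmt_0_general (d n k : ℕ) (hn : 0 < n) (hk : 0 < k)
    (x : Fin n → EuclideanSpace ℝ (Fin d)) (y : Fin n → ℝ)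
    (ℓstar : EuclideanSpace ℝ (Fin d)) (I : Finset (Fin n))
    (hIy : ∀ i ∈ I, y i = (inner ℝ (x i) ℓstar : ℝ))
    (α : ℝ)
    (hAC : ∀ v : EuclideanSpace ℝ (Fin d), v ≠ 0 →
      ((I.filter (fun i => (inner ℝ (x i) v : ℝ) = 0)).card : ℝ) < α * I.card)
    (S : Fin k → Finset (Fin n))
    (hdisj : ∀ j j' : Fin k, j ≠ j' → Disjoint (S j) (S j'))
    (hcover : Finset.univ.biUnion S = (Finset.univ : Finset (Fin n)))
    (hsize : ∀ j, α * n ≤ ((S j).card : ℝ))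
    (ℓ : Fin k → EuclideanSpace ℝ (Fin d))
    (hℓ : ∀ j, ∀ i ∈ S j, y i = (inner ℝ (x i) (ℓ j) : ℝ)) :
    ∃ j, ℓ j = ℓstar := by
  have : Nonempty (Fin k) := ⟨⟨0, hk⟩⟩
  obtain ⟨j, hj⟩ := exists_card_mul_le_card_inter_mul hdisj hcover I
  rw [Fintype.card_fin] at hj
  have hjR : (#(S j) : ℝ) * #I ≤ #(I ∩ S j) * n := by exact_mod_cast hj
  have hmany : α * #I ≤ #(I ∩ S j) := by
    refine le_of_mul_le_mul_right ?_ (Nat.cast_pos.mpr hn : (0 : ℝ) < n)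
    calc α * #I * n = α * n * #I := by ring
      _ ≤ #(S j) * #I := by gcongr; exact hsize j
      _ ≤ #(I ∩ S j) * n := hjR
  refine ⟨j, IsAntiConcentrated.eq_of_inner_eq hAC inter_subset_left hmany fun i hi => ?_⟩
  rw [← hℓ j i (mem_inter.mp hi).2, ← hIy i (mem_inter.mp hi).1]

theorem stmt_0 (d n k : ℕ) (hd : 0 < d) (hn : 0 < n) (hk : 0 < k)
    (x : Fin n → EuclideanSpace ℝ (Fin d)) (y : Fin n → ℝ)
    (ℓstar : EuclideanSpace ℝ (Fin d)) (I : Finset (Fin n)) (hI : I.Nonempty)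
    (hIy : ∀ i ∈ I, y i = (inner ℝ (x i) ℓstar : ℝ))
    (α : ℝ) (hα0 : 0 < α) (hα1 : α ≤ 1)
    (hAC : ∀ v : EuclideanSpace ℝ (Fin d), v ≠ 0 →
      ((I.filter (fun i => (inner ℝ (x i) v : ℝ) = 0)).card : ℝ) < α * I.card)
    (S : Fin k → Finset (Fin n))
    (hdisj : ∀ j j' : Fin k, j ≠ j' → Disjoint (S j) (S j'))
    (hcover : Finset.univ.biUnion S = (Finset.univ : Finset (Fin n)))
    (hsize : ∀ j, α * n ≤ ((S j).card : ℝ))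
    (ℓ : Fin k → EuclideanSpace ℝ (Fin d))
    (hℓ : ∀ j, ∀ i ∈ S j, y i = (inner ℝ (x i) (ℓ j) : ℝ)) :
    ∃ j, ℓ j = ℓstar :=
  stmt_0_general d n k hn hk x y ℓstar I hIy α hAC S hdisj hcover hsize ℓ hℓ
end

section
/- Let n ≥ m ≥ 1 be integers, let 𝒞 be a nonempty finite family of m-element subsets of {1, …, n}, and let I ∈ 𝒞. For a probability distribution μ on 𝒞 and i ∈ {1, …, n}, write W_i(μ) = Pr_{S∼μ}[i ∈ S]. If μ minimizes ∑_{i=1}^n W_i(μ)² among all probability distributions on 𝒞, then ∑_{i∈I} W_i(μ) ≥ m²/n. -/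
/-!
Moving a small amount `t` of the mass of `μ` onto the single set `I` changes the marginal vector
`a` into `(1 - t) a + t 𝟙_I`. Minimality of `‖a‖²` forces the derivative at `t = 0` to be
nonnegative, i.e. `‖a‖² ≤ ⟪a, 𝟙_I⟫ = ∑_{i ∈ I} a_i`. Since the marginals of a distribution on
`m`-sets add up to `m`, Cauchy–Schwarz gives `‖a‖² ≥ m² / n`.
-/

open Finset Filter Topology

lemma nonneg_of_forall_nonneg_add_mul {D C : ℝ} (h : ∀ t : ℝ, 0 < t → t ≤ 1 → 0 ≤ D + t * C) :
    0 ≤ D := by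
  have hlim : Tendsto (fun t : ℝ => D + t * C) (𝓝[>] 0) (𝓝 D) :=
    ((continuous_const.add (continuous_id.mul continuous_const)).tendsto' 0 D (by simp)).mono_left
      nhdsWithin_le_nhds
  refine ge_of_tendsto hlim ?_
  filter_upwards [Ioc_mem_nhdsGT one_pos] with t ht using h t ht.1 ht.2

lemma sum_mul_sub_nonneg_of_forall_sum_sq_le {ι : Type*} [Fintype ι] (a b : ι → ℝ)
    (h : ∀ t : ℝ, 0 < t → t ≤ 1 → ∑ i, a i ^ 2 ≤ ∑ i, ((1 - t) * a i + t * b i) ^ 2) :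
    0 ≤ ∑ i, a i * (b i - a i) := by
  refine nonneg_of_forall_nonneg_add_mul (C := (∑ i, (b i - a i) ^ 2) / 2) fun t ht0 ht1 => ?_
  have hexpand : ∑ i, ((1 - t) * a i + t * b i) ^ 2 =
      ∑ i, a i ^ 2 + 2 * t * ∑ i, a i * (b i - a i) + t ^ 2 * ∑ i, (b i - a i) ^ 2 := by
    simp only [mul_sum, ← sum_add_distrib]
    exact sum_congr rfl fun i _ => by ring
  have := h t ht0 ht1
  rw [hexpand] at this
  nlinarith

section Marginal

variable {ι : Type*} [DecidableEq ι]

/-- The paper's `W_i(μ) = Pr_{S ∼ μ}[i ∈ S]`. -/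
def marginal (𝒞 : Finset (Finset ι)) (μ : Finset ι → ℝ) (i : ι) : ℝ :=
  ∑ S ∈ 𝒞.filter (fun S => i ∈ S), μ S

lemma sum_marginal_of_forall_card_eq [Fintype ι] (𝒞 : Finset (Finset ι)) (μ : Finset ι → ℝ)
    {m : ℕ} (h𝒞 : ∀ S ∈ 𝒞, S.card = m) : ∑ i, marginal 𝒞 μ i = m * ∑ S ∈ 𝒞, μ S := by
  calc ∑ i, marginal 𝒞 μ i = ∑ S ∈ 𝒞, ∑ i, if i ∈ S then μ S else 0 := by
        simp only [marginal, sum_filter]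
        exact sum_comm
    _ = ∑ S ∈ 𝒞, (m : ℝ) * μ S := by
        refine sum_congr rfl fun S hS => ?_
        rw [sum_ite_mem, univ_inter, sum_const, h𝒞 S hS, nsmul_eq_mul]
    _ = m * ∑ S ∈ 𝒞, μ S := (mul_sum _ _ _).symm

lemma marginal_mix_single {𝒞 : Finset (Finset ι)} {I : Finset ι} (hI : I ∈ 𝒞)
    (μ : Finset ι → ℝ) (t : ℝ) (i : ι) :
    marginal 𝒞 (fun S => (1 - t) * μ S + t * if S = I then 1 else 0) i =
      (1 - t) * marginal 𝒞 μ i + t * if i ∈ I then 1 else 0 := by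
  simp only [marginal, sum_add_distrib, ← mul_sum, sum_ite_eq', mem_filter, hI, true_and]

lemma sum_sq_marginal_le_sum_marginal_of_isMin [Fintype ι] {𝒞 : Finset (Finset ι)}
    {I : Finset ι} (hI : I ∈ 𝒞) {μ : Finset ι → ℝ} (hμ0 : ∀ S ∈ 𝒞, 0 ≤ μ S) (hμ1 : ∑ S ∈ 𝒞, μ S = 1)
    (hmin : ∀ ν : Finset ι → ℝ, (∀ S ∈ 𝒞, 0 ≤ ν S) → ∑ S ∈ 𝒞, ν S = 1 →
      ∑ i, marginal 𝒞 μ i ^ 2 ≤ ∑ i, marginal 𝒞 ν i ^ 2) :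
    ∑ i, marginal 𝒞 μ i ^ 2 ≤ ∑ i ∈ I, marginal 𝒞 μ i := by
  set a := marginal 𝒞 μ
  have hopt : ∀ t : ℝ, 0 < t → t ≤ 1 →
      ∑ i, a i ^ 2 ≤ ∑ i, ((1 - t) * a i + t * if i ∈ I then 1 else 0) ^ 2 := by
    intro t ht0 ht1
    have hν0 : ∀ S ∈ 𝒞, 0 ≤ (1 - t) * μ S + t * if S = I then 1 else 0 := fun S hS => by
      have hμS := hμ0 S hS
      have ht : 0 ≤ 1 - t := by linarith
      positivity
    have hν1 : ∑ S ∈ 𝒞, ((1 - t) * μ S + t * if S = I then 1 else 0) = 1 := by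
      simp only [sum_add_distrib, ← mul_sum, hμ1, sum_ite_eq', hI, if_true]
      ring
    simpa only [marginal_mix_single hI] using hmin _ hν0 hν1
  have hfirst := sum_mul_sub_nonneg_of_forall_sum_sq_le a _ hopt
  have hinner : ∑ i, a i * (if i ∈ I then 1 else 0) = ∑ i ∈ I, a i := by
    simp only [mul_ite, mul_one, mul_zero, sum_ite_mem, univ_inter]
  simp only [mul_sub, sum_sub_distrib, hinner, ← sq] at hfirst
  linarith

end Marginal

theorem stmt_1_general (n m : ℕ)
    (𝒞 : Finset (Finset (Fin n))) (h𝒞card : ∀ S ∈ 𝒞, S.card = m)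
    (I : Finset (Fin n)) (hI : I ∈ 𝒞)
    (μ : Finset (Fin n) → ℝ) (hμ0 : ∀ S ∈ 𝒞, 0 ≤ μ S)
    (hμ1 : ∑ S ∈ 𝒞, μ S = 1)
    (hmin : ∀ ν : Finset (Fin n) → ℝ, (∀ S ∈ 𝒞, 0 ≤ ν S) → (∑ S ∈ 𝒞, ν S) = 1 →
      ∑ i : Fin n, (∑ S ∈ 𝒞.filter (fun S => i ∈ S), μ S) ^ 2 ≤
        ∑ i : Fin n, (∑ S ∈ 𝒞.filter (fun S => i ∈ S), ν S) ^ 2) :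
    (m ^ 2 : ℝ) / n ≤ ∑ i ∈ I, ∑ S ∈ 𝒞.filter (fun S => i ∈ S), μ S := by
  have htotal : ∑ i, marginal 𝒞 μ i = m := by
    rw [sum_marginal_of_forall_card_eq 𝒞 μ h𝒞card, hμ1, mul_one]
  have hCS : (m : ℝ) ^ 2 ≤ (∑ i, marginal 𝒞 μ i ^ 2) * n := by
    simpa only [htotal, card_univ, Fintype.card_fin, mul_comm] using
      sq_sum_le_card_mul_sum_sq (s := univ) (f := marginal 𝒞 μ)
  calc (m ^ 2 : ℝ) / n ≤ ∑ i, marginal 𝒞 μ i ^ 2 :=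
        div_le_of_le_mul₀ n.cast_nonneg (sum_nonneg fun i _ => sq_nonneg _) hCS
    _ ≤ ∑ i ∈ I, marginal 𝒞 μ i := sum_sq_marginal_le_sum_marginal_of_isMin hI hμ0 hμ1 hmin

theorem stmt_1 (n m : ℕ) (hm : 1 ≤ m) (hmn : m ≤ n)
    (𝒞 : Finset (Finset (Fin n))) (h𝒞card : ∀ S ∈ 𝒞, S.card = m)
    (I : Finset (Fin n)) (hI : I ∈ 𝒞)
    (μ : Finset (Fin n) → ℝ) (hμ0 : ∀ S ∈ 𝒞, 0 ≤ μ S)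
    (hμ1 : ∑ S ∈ 𝒞, μ S = 1)
    (hmin : ∀ ν : Finset (Fin n) → ℝ, (∀ S ∈ 𝒞, 0 ≤ ν S) → (∑ S ∈ 𝒞, ν S) = 1 →
      ∑ i : Fin n, (∑ S ∈ 𝒞.filter (fun S => i ∈ S), μ S) ^ 2 ≤
        ∑ i : Fin n, (∑ S ∈ 𝒞.filter (fun S => i ∈ S), ν S) ^ 2) :
    (m ^ 2 : ℝ) / n ≤ ∑ i ∈ I, ∑ S ∈ 𝒞.filter (fun S => i ∈ S), μ S :=
  stmt_1_general n m 𝒞 h𝒞card I hI μ hμ0 hμ1 hmin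
end

section
/- Let 0 < δ < α ≤ 1, let n, d be positive integers with α·n an integer, let x_1, …, x_n ∈ ℝ^d with labels y_1, …, y_n ∈ ℝ, let ℓ* ∈ ℝ^d, and let I ⊆ {1, …, n} with |I| = α·n and y_i = ⟨x_i, ℓ*⟩ for all i ∈ I. Assume for every nonzero v ∈ ℝ^d that |{i ∈ I : ⟨x_i, v⟩ = 0}| < δ·|I|. Let 𝒞 = {S ⊆ {1, …, n} : |S| = α·n and there exists ℓ ∈ ℝ^d with y_i = ⟨x_i, ℓ⟩ for all i ∈ S} (so I ∈ 𝒞), and let μ be a probability distribution on 𝒞 minimizing ∑_{i=1}^n Pr_{S∼μ}[i ∈ S]² among all probability distributions on 𝒞. Let k = ⌈20/(α−δ)⌉ and let S_1, …, S_k be drawn independently from μ. Then with probability at least 0.99, there exists j ≤ k such that every ℓ ∈ ℝ^d satisfying y_i = ⟨x_i, ℓ⟩ for all i ∈ S_j equals ℓ*. -/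
/-!
Let `p i` be the probability that a sample of `μ` contains `i`, so that `∑ i, p i = m`.
Comparing `μ` with the mixtures `(1 - ε) μ + ε [I]` shows `∑ p i ^ 2 ≤ ∑ i ∈ I, p i`, while
Cauchy–Schwarz gives `∑ p i ^ 2 ≥ m ^ 2 / n = α m`. So a sample meets `I` in `α m` points on
average, hence in at least `δ m` points with probability at least `α - δ`; by anti-concentration
any solution on such a sample agrees with `ℓstar` on too many points of `I` to differ from it.
All `k` independent samples fail with probability at most `(1 - (α - δ)) ^ k ≤ exp (-20)`.
-/

open Finset Filter Topology

lemma nonneg_of_forall_nonneg_add_mul_s2 {a b : ℝ}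
    (h : ∀ ε : ℝ, 0 < ε → ε ≤ 1 → 0 ≤ a + ε * b) : 0 ≤ a := by
  have hlim : Tendsto (fun ε : ℝ => a + ε * b) (𝓝[>] 0) (𝓝 a) := by
    refine tendsto_nhdsWithin_of_tendsto_nhds ?_
    have hcont : Continuous fun ε : ℝ => a + ε * b := by fun_prop
    simpa using hcont.tendsto 0
  refine ge_of_tendsto hlim ?_
  filter_upwards [Ioo_mem_nhdsGT one_pos] with ε hε using h ε hε.1 hε.2.le

lemma sum_sq_le_sum_mul_of_forall_sum_sq_le {ι : Type*} (s : Finset ι) (p t : ι → ℝ)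
    (h : ∀ ε : ℝ, 0 < ε → ε ≤ 1 →
      ∑ i ∈ s, p i ^ 2 ≤ ∑ i ∈ s, ((1 - ε) * p i + ε * t i) ^ 2) :
    ∑ i ∈ s, p i ^ 2 ≤ ∑ i ∈ s, p i * t i := by
  set A := ∑ i ∈ s, p i * (t i - p i)
  set B := ∑ i ∈ s, (t i - p i) ^ 2
  have hexpand : ∀ ε : ℝ, ∑ i ∈ s, ((1 - ε) * p i + ε * t i) ^ 2
      = ∑ i ∈ s, p i ^ 2 + ε * (2 * A + ε * B) := by
    intro ε
    simp only [A, B, mul_add, mul_sum, ← sum_add_distrib]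
    exact sum_congr rfl fun i _ => by ring
  have hA : 0 ≤ A := by
    refine nonneg_of_forall_nonneg_add_mul_s2 (b := B / 2) fun ε hε hε1 => ?_
    have := h ε hε hε1
    rw [hexpand] at this
    nlinarith
  have hA_eq : A = ∑ i ∈ s, p i * t i - ∑ i ∈ s, p i ^ 2 := by
    rw [← sum_sub_distrib]
    exact sum_congr rfl fun i _ => by ring
  linarith

lemma sub_le_sum_filter_of_mul_le_sum_mul {α : Type*} {s : Finset α} {f w : α → ℝ}
    {a c M : ℝ} (hM : 0 < M) (hc : 0 ≤ c) (hw0 : ∀ x ∈ s, 0 ≤ w x) (hw1 : ∑ x ∈ s, w x = 1)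
    (hfM : ∀ x ∈ s, f x ≤ M) (h : a * M ≤ ∑ x ∈ s, f x * w x) :
    a - c ≤ ∑ x ∈ s with c * M ≤ f x, w x := by
  set g := ∑ x ∈ s with c * M ≤ f x, w x
  have hg0 : 0 ≤ g := sum_nonneg fun x hx => hw0 x (mem_filter.1 hx).1
  have hrest : ∑ x ∈ s with ¬ c * M ≤ f x, w x = 1 - g := by
    rw [← hw1, ← sum_filter_add_sum_filter_not s (fun x => c * M ≤ f x)]; ring
  have hlarge : ∑ x ∈ s with c * M ≤ f x, f x * w x ≤ M * g := by
    rw [mul_sum]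
    exact sum_le_sum fun x hx => mul_le_mul_of_nonneg_right (hfM x (mem_filter.1 hx).1)
      (hw0 x (mem_filter.1 hx).1)
  have hsmall : ∑ x ∈ s with ¬ c * M ≤ f x, f x * w x ≤ c * M * (1 - g) := by
    rw [← hrest, mul_sum]
    refine sum_le_sum fun x hx => ?_
    rw [mem_filter, not_le] at hx
    exact mul_le_mul_of_nonneg_right hx.2.le (hw0 x hx.1)
  have hsplit : a * M ≤ (g + c * (1 - g)) * M := by
    rw [← sum_filter_add_sum_filter_not s (fun x => c * M ≤ f x)] at h
    linarith
  have := le_of_mul_le_mul_right hsplit hM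
  nlinarith [mul_nonneg hc hg0]

lemma pow_le_exp_neg_mul {b ε : ℝ} (hb0 : 0 ≤ b) (hb : b ≤ 1 - ε) (k : ℕ) :
    b ^ k ≤ Real.exp (-(ε * k)) := by
  calc b ^ k ≤ Real.exp (-ε) ^ k := pow_le_pow_left₀ hb0 (hb.trans (Real.one_sub_le_exp_neg ε)) k
    _ = Real.exp (-(ε * k)) := by rw [← Real.exp_nat_mul]; ring_nf

lemma exp_neg_twenty_le : Real.exp (-20) ≤ 0.01 := by
  have h : (2 : ℝ) ^ 20 ≤ Real.exp 20 := by
    calc (2 : ℝ) ^ 20 ≤ Real.exp 1 ^ 20 := pow_le_pow_left₀ (by norm_num) Real.exp_one_gt_two.le _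
      _ = Real.exp 20 := by rw [← Real.exp_nat_mul]; norm_num
  rw [Real.exp_neg, inv_le_comm₀ (Real.exp_pos _) (by norm_num)]
  linarith

section Coverage

variable {ι : Type*} [DecidableEq ι] (𝒞 : Finset (Finset ι)) (μ : Finset ι → ℝ)

def coverage (i : ι) : ℝ := ∑ S ∈ 𝒞 with i ∈ S, μ S

def IsMaximallyUniform [Fintype ι] : Prop :=
  ∀ ν : Finset ι → ℝ, (∀ S ∈ 𝒞, 0 ≤ ν S) → ∑ S ∈ 𝒞, ν S = 1 →
    ∑ i, coverage 𝒞 μ i ^ 2 ≤ ∑ i, coverage 𝒞 ν i ^ 2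

lemma sum_coverage (T : Finset ι) :
    ∑ i ∈ T, coverage 𝒞 μ i = ∑ S ∈ 𝒞, (#(T ∩ S) : ℝ) * μ S := by
  simp only [coverage, sum_filter]
  rw [sum_comm]
  refine sum_congr rfl fun S _ => ?_
  rw [sum_ite_mem, sum_const, nsmul_eq_mul]

lemma sum_coverage_univ [Fintype ι] {m : ℕ} (hcard : ∀ S ∈ 𝒞, #S = m)
    (hμ1 : ∑ S ∈ 𝒞, μ S = 1) : ∑ i, coverage 𝒞 μ i = m := by
  rw [sum_coverage, ← mul_one (m : ℝ), ← hμ1, mul_sum]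
  exact sum_congr rfl fun S hS => by rw [univ_inter, hcard S hS]

lemma coverage_mix_indicator {I : Finset ι} (hI : I ∈ 𝒞) (ε : ℝ) (i : ι) :
    coverage 𝒞 (fun S => (1 - ε) * μ S + ε * if S = I then 1 else 0) i
      = (1 - ε) * coverage 𝒞 μ i + ε * if i ∈ I then 1 else 0 := by
  simp only [coverage, sum_add_distrib, ← mul_sum, sum_ite_eq', mem_filter, hI, true_and]

variable {𝒞 μ}

lemma sum_sq_coverage_le_sum_coverage [Fintype ι] {I : Finset ι} (hI : I ∈ 𝒞)
    (hμ0 : ∀ S ∈ 𝒞, 0 ≤ μ S) (hμ1 : ∑ S ∈ 𝒞, μ S = 1) (hmin : IsMaximallyUniform 𝒞 μ) :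
    ∑ i, coverage 𝒞 μ i ^ 2 ≤ ∑ i ∈ I, coverage 𝒞 μ i := by
  have hmix : ∀ ε : ℝ, 0 < ε → ε ≤ 1 → ∑ i, coverage 𝒞 μ i ^ 2 ≤
      ∑ i, ((1 - ε) * coverage 𝒞 μ i + ε * if i ∈ I then 1 else 0) ^ 2 := by
    intro ε hε hε1
    simp only [← coverage_mix_indicator 𝒞 μ hI]
    refine hmin _ (fun S hS => ?_) ?_
    · have := hμ0 S hS
      split_ifs <;> nlinarith
    · rw [sum_add_distrib, ← mul_sum, ← mul_sum, hμ1, sum_ite_eq', if_pos hI]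
      ring
  simpa [mul_ite, ← sum_filter, filter_mem_eq_inter] using
    sum_sq_le_sum_mul_of_forall_sum_sq_le _ _ _ hmix

lemma sq_le_card_mul_sum_coverage [Fintype ι] {m : ℕ} {I : Finset ι} (hcard : ∀ S ∈ 𝒞, #S = m)
    (hI : I ∈ 𝒞) (hμ0 : ∀ S ∈ 𝒞, 0 ≤ μ S) (hμ1 : ∑ S ∈ 𝒞, μ S = 1)
    (hmin : IsMaximallyUniform 𝒞 μ) :
    (m : ℝ) ^ 2 ≤ Fintype.card ι * ∑ i ∈ I, coverage 𝒞 μ i :=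
  calc (m : ℝ) ^ 2 = (∑ i, coverage 𝒞 μ i) ^ 2 := by rw [sum_coverage_univ 𝒞 μ hcard hμ1]
    _ ≤ Fintype.card ι * ∑ i, coverage 𝒞 μ i ^ 2 := by
      simpa using sq_sum_le_card_mul_sum_sq (s := univ) (f := coverage 𝒞 μ)
    _ ≤ Fintype.card ι * ∑ i ∈ I, coverage 𝒞 μ i := by
      gcongr
      exact sum_sq_coverage_le_sum_coverage hI hμ0 hμ1 hmin

end Coverage

lemma sum_piFinset_ite_exists {α : Type*} (k : ℕ) (s : Finset α) (w : α → ℝ)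
    (P : α → Prop) [DecidablePred P] (hw : ∑ a ∈ s, w a = 1) :
    ∑ f ∈ Fintype.piFinset (fun _ : Fin k => s), (if ∃ j, P (f j) then ∏ j, w (f j) else 0)
      = 1 - (∑ a ∈ s with ¬ P a, w a) ^ k := by
  have hall : ∑ f ∈ Fintype.piFinset (fun _ : Fin k => s), ∏ j, w (f j) = 1 := by
    rw [← prod_univ_sum]; simp [hw]
  have hnone : ∑ f ∈ Fintype.piFinset (fun _ : Fin k => s) with ¬ ∃ j, P (f j), ∏ j, w (f j)
      = (∑ a ∈ s with ¬ P a, w a) ^ k := by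
    have : {f ∈ Fintype.piFinset (fun _ : Fin k => s) | ¬ ∃ j, P (f j)}
        = Fintype.piFinset (fun _ : Fin k => {a ∈ s | ¬ P a}) := by
      ext f; simp [forall_and]
    rw [this, ← prod_univ_sum, prod_const, card_univ, Fintype.card_fin]
  rw [← sum_filter, ← hall, ← hnone]
  exact eq_sub_of_add_eq (sum_filter_add_sum_filter_not _ _ _)

lemma eq_of_card_filter_inner_eq_zero_lt {ι E : Type*} [DecidableEq ι] [NormedAddCommGroup E]
    [InnerProductSpace ℝ E] (x : ι → E) (y : ι → ℝ) {I S : Finset ι} {ℓ₀ ℓ : E} {c : ℝ}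
    (hsparse : ∀ v : E, v ≠ 0 → (#{i ∈ I | inner ℝ (x i) v = 0} : ℝ) < c)
    (hI : ∀ i ∈ I, y i = inner ℝ (x i) ℓ₀) (hS : ∀ i ∈ S, y i = inner ℝ (x i) ℓ)
    (hlarge : c ≤ #(I ∩ S)) : ℓ = ℓ₀ := by
  by_contra hne
  have hsub : I ∩ S ⊆ {i ∈ I | inner ℝ (x i) (ℓ - ℓ₀) = 0} := by
    intro i hi
    obtain ⟨hiI, hiS⟩ := mem_inter.1 hi
    rw [mem_filter, inner_sub_right, ← hI i hiI, ← hS i hiS, sub_self]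
    exact ⟨hiI, rfl⟩
  have hsmall := hsparse _ (sub_ne_zero.2 hne)
  have hcard : (#(I ∩ S) : ℝ) ≤ #{i ∈ I | inner ℝ (x i) (ℓ - ℓ₀) = 0} := by
    exact_mod_cast card_le_card hsub
  linarith

open scoped Classical

theorem stmt_2_general (α δ : ℝ) (hδ0 : 0 < δ) (hδα : δ < α)
    (n d m : ℕ) (hn : 0 < n) (hm : (m : ℝ) = α * n)
    (x : Fin n → EuclideanSpace ℝ (Fin d)) (y : Fin n → ℝ)
    (ℓstar : EuclideanSpace ℝ (Fin d))
    (I : Finset (Fin n)) (hIcard : I.card = m)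
    (hIy : ∀ i ∈ I, y i = (inner ℝ (x i) ℓstar : ℝ))
    (hAC : ∀ v : EuclideanSpace ℝ (Fin d), v ≠ 0 →
      ((I.filter (fun i => (inner ℝ (x i) v : ℝ) = 0)).card : ℝ) < δ * I.card)
    (𝒞 : Finset (Finset (Fin n)))
    (h𝒞 : ∀ S : Finset (Fin n), S ∈ 𝒞 ↔
      (S.card = m ∧ ∃ ℓ : EuclideanSpace ℝ (Fin d), ∀ i ∈ S, y i = (inner ℝ (x i) ℓ : ℝ)))
    (μ : Finset (Fin n) → ℝ) (hμ0 : ∀ S ∈ 𝒞, 0 ≤ μ S)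
    (hμ1 : ∑ S ∈ 𝒞, μ S = 1)
    (hmin : ∀ ν : Finset (Fin n) → ℝ, (∀ S ∈ 𝒞, 0 ≤ ν S) → (∑ S ∈ 𝒞, ν S) = 1 →
      ∑ i : Fin n, (∑ S ∈ 𝒞.filter (fun S => i ∈ S), μ S) ^ 2 ≤
        ∑ i : Fin n, (∑ S ∈ 𝒞.filter (fun S => i ∈ S), ν S) ^ 2) :
    0.99 ≤ ∑ f ∈ Fintype.piFinset (fun _ : Fin ⌈20 / (α - δ)⌉₊ => 𝒞),
      (if ∃ j : Fin ⌈20 / (α - δ)⌉₊,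
          ∀ ℓ : EuclideanSpace ℝ (Fin d), (∀ i ∈ f j, y i = (inner ℝ (x i) ℓ : ℝ)) → ℓ = ℓstar
        then ∏ j : Fin ⌈20 / (α - δ)⌉₊, μ (f j) else 0) := by
  set k := ⌈20 / (α - δ)⌉₊
  rw [hIcard] at hAC
  have hm_pos : (0 : ℝ) < m := by rw [hm]; exact mul_pos (by linarith) (by exact_mod_cast hn)
  have hcard : ∀ S ∈ 𝒞, #S = m := fun S hS => ((h𝒞 S).1 hS).1
  have hI : I ∈ 𝒞 := (h𝒞 I).2 ⟨hIcard, ℓstar, hIy⟩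
  have hcovI : α * m ≤ ∑ S ∈ 𝒞, (#(I ∩ S) : ℝ) * μ S := by
    have := sq_le_card_mul_sum_coverage hcard hI hμ0 hμ1 hmin
    rw [sum_coverage, Fintype.card_fin] at this
    have hsq : (m : ℝ) ^ 2 = n * (α * m) := by rw [sq]; nth_rewrite 2 [hm]; ring
    exact le_of_mul_le_mul_left (hsq ▸ this) (Nat.cast_pos.2 hn)
  have hgood : α - δ ≤ ∑ S ∈ 𝒞 with δ * m ≤ #(I ∩ S), μ S := by
    refine sub_le_sum_filter_of_mul_le_sum_mul hm_pos hδ0.le hμ0 hμ1 (fun S _ => ?_) hcovI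
    exact_mod_cast hIcard ▸ card_le_card inter_subset_left
  set P := fun S : Finset (Fin n) => ∀ ℓ : EuclideanSpace ℝ (Fin d),
    (∀ i ∈ S, y i = (inner ℝ (x i) ℓ : ℝ)) → ℓ = ℓstar
  have hbad : ∑ S ∈ 𝒞 with ¬ P S, μ S ≤ 1 - (α - δ) := by
    have hsub : {S ∈ 𝒞 | δ * m ≤ #(I ∩ S)} ⊆ {S ∈ 𝒞 | P S} := fun S hS =>
      mem_filter.2 ⟨(mem_filter.1 hS).1, fun ℓ hℓ =>
        eq_of_card_filter_inner_eq_zero_lt x y hAC hIy hℓ (mem_filter.1 hS).2⟩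
    have := sum_le_sum_of_subset_of_nonneg hsub fun S hS _ => hμ0 S (mem_filter.1 hS).1
    have := sum_filter_add_sum_filter_not 𝒞 P μ
    linarith
  have hk : 20 ≤ (α - δ) * k := by
    have := Nat.le_ceil (20 / (α - δ))
    rwa [div_le_iff₀ (by linarith), mul_comm] at this
  rw [sum_piFinset_ite_exists k 𝒞 μ P hμ1]
  have := pow_le_exp_neg_mul (sum_nonneg fun S hS => hμ0 S (mem_filter.1 hS).1) hbad k
  have := Real.exp_le_exp.2 (neg_le_neg hk)
  linarith [exp_neg_twenty_le]

theorem stmt_2 (α δ : ℝ) (hδ0 : 0 < δ) (hδα : δ < α) (hα1 : α ≤ 1)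
    (n d m : ℕ) (hn : 0 < n) (hd : 0 < d) (hm : (m : ℝ) = α * n)
    (x : Fin n → EuclideanSpace ℝ (Fin d)) (y : Fin n → ℝ)
    (ℓstar : EuclideanSpace ℝ (Fin d))
    (I : Finset (Fin n)) (hIcard : I.card = m)
    (hIy : ∀ i ∈ I, y i = (inner ℝ (x i) ℓstar : ℝ))
    (hAC : ∀ v : EuclideanSpace ℝ (Fin d), v ≠ 0 →
      ((I.filter (fun i => (inner ℝ (x i) v : ℝ) = 0)).card : ℝ) < δ * I.card)
    (𝒞 : Finset (Finset (Fin n)))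
    (h𝒞 : ∀ S : Finset (Fin n), S ∈ 𝒞 ↔
      (S.card = m ∧ ∃ ℓ : EuclideanSpace ℝ (Fin d), ∀ i ∈ S, y i = (inner ℝ (x i) ℓ : ℝ)))
    (μ : Finset (Fin n) → ℝ) (hμ0 : ∀ S ∈ 𝒞, 0 ≤ μ S)
    (hμ1 : ∑ S ∈ 𝒞, μ S = 1)
    (hmin : ∀ ν : Finset (Fin n) → ℝ, (∀ S ∈ 𝒞, 0 ≤ ν S) → (∑ S ∈ 𝒞, ν S) = 1 →
      ∑ i : Fin n, (∑ S ∈ 𝒞.filter (fun S => i ∈ S), μ S) ^ 2 ≤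
        ∑ i : Fin n, (∑ S ∈ 𝒞.filter (fun S => i ∈ S), ν S) ^ 2) :
    0.99 ≤ ∑ f ∈ Fintype.piFinset (fun _ : Fin ⌈20 / (α - δ)⌉₊ => 𝒞),
      (if ∃ j : Fin ⌈20 / (α - δ)⌉₊,
          ∀ ℓ : EuclideanSpace ℝ (Fin d), (∀ i ∈ f j, y i = (inner ℝ (x i) ℓ : ℝ)) → ℓ = ℓstar
        then ∏ j : Fin ⌈20 / (α - δ)⌉₊, μ (f j) else 0) :=
  stmt_2_general α δ hδ0 hδα n d m hn hm x y ℓstar I hIcard hIy hAC 𝒞 h𝒞 μ hμ0 hμ1 hmin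
end

section
/- Let d ≥ 1 and let v ∈ ℝ^d be nonzero. If x is drawn uniformly at random from {0,1}^d, then Pr[∑_{i=1}^d x_i v_i = 0] ≤ 1/2. -/
open scoped Classical

theorem stmt_3 (d : ℕ) (hd : 1 ≤ d) (v : Fin d → ℝ) (hv : v ≠ 0) :
    ((Finset.univ.filter
        (fun x : Fin d → Fin 2 => ∑ i, ((x i : ℕ) : ℝ) * v i = 0)).card : ℝ) / 2 ^ d
      ≤ 1 / 2 := by
  obtain ⟨i, hi⟩ : ∃ i, v i ≠ 0 := by
    by_contra h
    push_neg at h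
    exact hv (funext h)
  set p : (Fin d → Fin 2) → Prop := fun x => ∑ j, ((x j : ℕ) : ℝ) * v j = 0 with hp
  set A := Finset.univ.filter p with hA
  set B := Finset.univ.filter (fun x => ¬ p x) with hB
  set f : (Fin d → Fin 2) → (Fin d → Fin 2) :=
    fun x => Function.update x i (1 - x i) with hf
  have hflip : ∀ a : Fin 2, (1 : Fin 2) - (1 - a) = a := by decide
  have hinv : Function.Involutive f := by
    intro x
    funext j
    by_cases hj : j = i
    · subst hj
      simp [hf, Function.update_self, hflip]
    · simp [hf, Function.update_of_ne hj]
  have hsum : ∀ x : Fin d → Fin 2,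
      (∑ j, (((f x) j : ℕ) : ℝ) * v j) - (∑ j, ((x j : ℕ) : ℝ) * v j)
        = ((((1 - x i : Fin 2) : ℕ) : ℝ) - ((x i : ℕ) : ℝ)) * v i := by
    intro x
    rw [← Finset.sum_sub_distrib]
    rw [Finset.sum_eq_single i]
    · simp [hf]; ring
    · intro j _ hj
      simp [hf, Function.update_of_ne hj]
    · simp
  have hdiff : ∀ x : Fin d → Fin 2,
      ((((1 - x i : Fin 2) : ℕ) : ℝ) - ((x i : ℕ) : ℝ)) ≠ 0 := by
    intro x
    have : x i = 0 ∨ x i = 1 := by omega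
    rcases this with h | h <;> rw [h] <;> norm_num
  have hmaps : ∀ x ∈ A, f x ∈ B := by
    intro x hx
    rw [hA, Finset.mem_filter] at hx
    rw [hB, Finset.mem_filter]
    refine ⟨Finset.mem_univ _, ?_⟩
    intro hfx
    have := hsum x
    rw [hfx, hx.2, sub_zero] at this
    exact mul_ne_zero (hdiff x) hi this.symm
  have hcard : A.card ≤ B.card :=
    Finset.card_le_card_of_injOn f hmaps (fun a _ b _ h => hinv.injective h)
  have htotal : A.card + B.card = 2 ^ d := by
    rw [hA, hB, Finset.card_filter_add_card_filter_not]
    simp [Fintype.card_fun]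
  rw [div_le_div_iff₀ (by positivity) (by norm_num)]
  have : (A.card : ℝ) + B.card = 2 ^ d := by exact_mod_cast htotal
  have h2 : (A.card : ℝ) ≤ B.card := by exact_mod_cast hcard
  linarith
end

section
/- Let q ≥ 2 and d ≥ 1 be integers and let v ∈ ℝ^d be nonzero. If x is drawn uniformly at random from {0, 1, …, q−1}^d, then Pr[∑_{i=1}^d x_i v_i = 0] ≤ 1/q. -/
open scoped Classical

/- The zero set of `x ↦ ∑ xᵢ vᵢ` meets every line `{x : xⱼ fixed for j ≠ i}` of the grid, with
`vᵢ ≠ 0`, in at most one point (an independent set of the `q`-ary Hamming graph in direction `i`).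
The `q` lines in direction `i` through its points are disjoint, so it has at most `q^(d-1)` points. -/

theorem Finset.card_mul_card_le_card_pow {ι α : Type*} [Fintype ι] [DecidableEq ι] [Fintype α]
    (s : Finset (ι → α)) (i : ι) (hs : ∀ x ∈ s, ∀ y ∈ s, (∀ j ≠ i, x j = y j) → x = y) :
    s.card * Fintype.card α ≤ Fintype.card α ^ Fintype.card ι := by
  rw [← Fintype.card_fun, ← Finset.card_univ, ← Finset.card_univ, ← Finset.card_product]
  refine Finset.card_le_card_of_injOn (fun p => Function.update p.1 i p.2)
    (fun _ _ => Finset.mem_univ _) ?_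
  rintro ⟨x, a⟩ hx ⟨y, b⟩ hy hxy
  simp only [Finset.coe_product, Set.mem_prod, Finset.mem_coe] at hx hy
  have hab : a = b := by simpa using congrFun hxy i
  refine Prod.ext (hs x hx.1 y hy.1 fun j hj => ?_) hab
  simpa [Function.update_of_ne hj] using congrFun hxy j

theorem eq_of_sum_mul_eq_of_forall_ne_eq {ι α R : Type*} [Fintype ι] [Ring R] [NoZeroDivisors R]
    {f : α → R} (hf : f.Injective) {v : ι → R} {i : ι} (hi : v i ≠ 0) {x y : ι → α}
    (hoff : ∀ j ≠ i, x j = y j) (hsum : ∑ j, f (x j) * v j = ∑ j, f (y j) * v j) : x = y := by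
  have hdiff : ∑ j, (f (x j) - f (y j)) * v j = (f (x i) - f (y i)) * v i :=
    Finset.sum_eq_single i (fun j _ hj => by rw [hoff j hj, sub_self, zero_mul])
      (fun h => absurd (Finset.mem_univ i) h)
  have hxi : x i = y i := by
    refine hf (sub_eq_zero.mp ((mul_eq_zero.mp ?_).resolve_right hi))
    rw [← hdiff]
    simp only [sub_mul, Finset.sum_sub_distrib, hsum, sub_self]
  funext j
  by_cases hj : j = i
  · exact hj ▸ hxi
  · exact hoff j hj

theorem stmt_4_general (q d : ℕ) (hq : 2 ≤ q) (v : Fin d → ℝ) (hv : v ≠ 0) :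
    ((Finset.univ.filter
        (fun x : Fin d → Fin q => ∑ i, ((x i : ℕ) : ℝ) * v i = 0)).card : ℝ) / (q : ℝ) ^ d
      ≤ 1 / (q : ℝ) := by
  obtain ⟨i, hi⟩ : ∃ i, v i ≠ 0 := Function.ne_iff.mp hv
  set S := Finset.univ.filter (fun x : Fin d → Fin q => ∑ i, ((x i : ℕ) : ℝ) * v i = 0)
  have hS : ∀ x ∈ S, ∀ y ∈ S, (∀ j ≠ i, x j = y j) → x = y := by
    intro x hx y hy hoff
    simp only [S, Finset.mem_filter, Finset.mem_univ, true_and] at hx hy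
    exact eq_of_sum_mul_eq_of_forall_ne_eq (f := fun a : Fin q => ((a : ℕ) : ℝ))
      (fun a b h => Fin.ext (Nat.cast_injective h)) hi hoff (hx.trans hy.symm)
  have hcard : S.card * q ≤ q ^ d := by
    simpa using S.card_mul_card_le_card_pow i hS
  have hq0 : (0 : ℝ) < q := by exact_mod_cast (by omega : 0 < q)
  rw [div_le_div_iff₀ (by positivity) hq0, one_mul]
  exact_mod_cast hcard

theorem stmt_4 (q d : ℕ) (hq : 2 ≤ q) (hd : 1 ≤ d) (v : Fin d → ℝ) (hv : v ≠ 0) :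
    ((Finset.univ.filter
        (fun x : Fin d → Fin q => ∑ i, ((x i : ℕ) : ℝ) * v i = 0)).card : ℝ) / (q : ℝ) ^ d
      ≤ 1 / (q : ℝ) :=
  stmt_4_general q d hq v hv
end

section
/- There exists a constant c > 0 such that for every integer d ≥ 1 and every real polynomial p of degree at most d with p(0) = 1, one has ∫ p(x)² dγ(x) ≥ c/√d, where γ is the standard Gaussian measure N(0,1) on ℝ. -/
/-!
Let `K` be the reproducing kernel at `0` of the polynomials of degree `≤ 2R + 1` in `L²(γ)`,
`K = ∑_{j ≤ R} He_{2j}(0) He_{2j} / (2j)!`. Then `⟨p, K⟩ = p(0)` and `‖K‖² = K(0)`, so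
Cauchy–Schwarz gives `p(0)² ≤ K(0) ‖p‖²`. Since `K(0) = ∑_{j ≤ R} C(2j, j) / 4^j
= (2R + 1) C(2R, R) / 4^R ≤ 2 √(R + 1)`, taking `R = ⌊d / 2⌋` yields `‖p‖² ≥ 1 / (2 √d)`.

The reproducing property comes from Gaussian integration by parts `∫ x q dγ = ∫ q' dγ`, which
gives `⟨q, He_m⟩ = ∫ q⁽ᵐ⁾ dγ` and makes the pairing of `p = p(0) + X q` with `K` telescope.
-/

open MeasureTheory ProbabilityTheory Polynomial Finset
open scoped NNReal Nat

namespace ProbabilityTheory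

variable {μ : ℝ} {v : ℝ≥0}

lemma integrable_pow_gaussianReal (n : ℕ) : Integrable (fun x : ℝ => x ^ n) (gaussianReal μ v) :=
  ((memLp_id_gaussianReal n).integrable_norm_pow').mono' (by fun_prop)
    (ae_of_all _ fun x => by simp [norm_pow])

lemma integrable_eval_gaussianReal (p : ℝ[X]) :
    Integrable (fun x => p.eval x) (gaussianReal μ v) := by
  simp_rw [eval_eq_sum_range]
  exact integrable_finsetSum _ fun n _ => (integrable_pow_gaussianReal n).const_mul _

lemma integrable_gaussianPDFReal_mul_eval (hv : v ≠ 0) (p : ℝ[X]) :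
    Integrable (fun x => gaussianPDFReal μ v x * p.eval x) := by
  have h := integrable_eval_gaussianReal (μ := μ) (v := v) p
  rw [gaussianReal_of_var_ne_zero _ hv, integrable_withDensity_iff_integrable_smul'
    (measurable_gaussianPDF μ v) (ae_of_all _ fun _ => gaussianPDF_lt_top)] at h
  simpa using h

lemma hasDerivAt_gaussianPDFReal (μ : ℝ) (v : ℝ≥0) (x : ℝ) :
    HasDerivAt (gaussianPDFReal μ v) (-((x - μ) / v) * gaussianPDFReal μ v x) x := by
  have h : HasDerivAt (fun y => -(y - μ) ^ 2 / (2 * v)) (-((x - μ) / v)) x :=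
    ((((hasDerivAt_id' x).sub_const μ).pow 2).neg.div_const _).congr_deriv (by ring)
  exact (h.exp.const_mul _).congr_deriv (by rw [gaussianPDFReal]; ring)

noncomputable def gaussianExpectation (μ : ℝ) (v : ℝ≥0) : ℝ[X] →ₗ[ℝ] ℝ where
  toFun p := ∫ x, p.eval x ∂gaussianReal μ v
  map_add' p q := by
    simp only [eval_add]
    exact integral_add (integrable_eval_gaussianReal p) (integrable_eval_gaussianReal q)
  map_smul' a p := by
    simp only [eval_smul, smul_eq_mul, RingHom.id_apply]
    exact integral_const_mul a _

lemma gaussianExpectation_apply (p : ℝ[X]) :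
    gaussianExpectation μ v p = ∫ x, p.eval x ∂gaussianReal μ v := rfl

lemma gaussianExpectation_C (a : ℝ) : gaussianExpectation μ v (C a) = a := by
  simp [gaussianExpectation_apply]

lemma gaussianExpectation_C_mul (a : ℝ) (p : ℝ[X]) :
    gaussianExpectation μ v (C a * p) = a * gaussianExpectation μ v p := by
  rw [C_mul', map_smul, smul_eq_mul]

lemma gaussianExpectation_sq_nonneg (p : ℝ[X]) : 0 ≤ gaussianExpectation μ v (p ^ 2) :=
  integral_nonneg fun x => by simp only [eval_pow]; positivity

theorem gaussianExpectation_X_sub_C_mul (p : ℝ[X]) :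
    gaussianExpectation μ v ((X - C μ) * p) = v * gaussianExpectation μ v (derivative p) := by
  rcases eq_or_ne v 0 with rfl | hv
  · simp [gaussianExpectation_apply, gaussianReal_zero_var]
  simp only [gaussianExpectation_apply, integral_gaussianReal_eq_integral_smul hv, smul_eq_mul]
  have hderiv : ∀ x, HasDerivAt (fun y => gaussianPDFReal μ v y * p.eval y)
      (gaussianPDFReal μ v x * (derivative p).eval x
        - (v : ℝ)⁻¹ * (gaussianPDFReal μ v x * ((X - C μ) * p).eval x)) x := fun x =>
    ((hasDerivAt_gaussianPDFReal μ v x).mul (p.hasDerivAt x)).congr_deriv (by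
      simp only [eval_mul, eval_sub, eval_X, eval_C]; ring)
  have h := integral_eq_zero_of_hasDerivAt_of_integrable hderiv
    ((integrable_gaussianPDFReal_mul_eval hv _).sub
      ((integrable_gaussianPDFReal_mul_eval hv _).const_mul _))
    (integrable_gaussianPDFReal_mul_eval hv p)
  rw [integral_sub (integrable_gaussianPDFReal_mul_eval hv _)
    ((integrable_gaussianPDFReal_mul_eval hv _).const_mul _), integral_const_mul] at h
  have hv' : (v : ℝ) ≠ 0 := by exact_mod_cast hv
  field_simp at h
  linarith

lemma gaussianExpectation_X_mul (p : ℝ[X]) :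
    gaussianExpectation 0 1 (X * p) = gaussianExpectation 0 1 (derivative p) := by
  simpa using gaussianExpectation_X_sub_C_mul (μ := 0) (v := 1) p

end ProbabilityTheory

noncomputable def hermiteReal (m : ℕ) : ℝ[X] := (hermite m).map (Int.castRingHom ℝ)

lemma hermiteReal_zero : hermiteReal 0 = 1 := by simp [hermiteReal]

lemma hermiteReal_succ (m : ℕ) :
    hermiteReal (m + 1) = X * hermiteReal m - derivative (hermiteReal m) := by
  simp [hermiteReal, hermite_succ, derivative_map]

lemma natDegree_hermiteReal (m : ℕ) : (hermiteReal m).natDegree = m := by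
  rw [hermiteReal, natDegree_map_of_leadingCoeff_ne_zero] <;> simp [leadingCoeff_hermite]

lemma eval_zero_hermiteReal_two_mul (j : ℕ) :
    (hermiteReal (2 * j)).eval 0 = (-1) ^ j * (2 * j - 1)‼ := by
  have h := coeff_hermite_explicit j 0
  simp only [add_zero, Nat.choose_zero_right, Nat.cast_one, mul_one] at h
  simp [hermiteReal, ← coeff_zero_eq_eval_zero, h]

theorem gaussianExpectation_mul_hermiteReal (q : ℝ[X]) (m : ℕ) :
    gaussianExpectation 0 1 (q * hermiteReal m) =
      gaussianExpectation 0 1 (derivative^[m] q) := by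
  induction m generalizing q with
  | zero => simp [hermiteReal_zero]
  | succ m ih =>
    have hX : X * (q * hermiteReal m) =
        q * hermiteReal (m + 1) + q * derivative (hermiteReal m) := by
      rw [hermiteReal_succ]; ring
    have h := gaussianExpectation_X_mul (q * hermiteReal m)
    rw [hX, derivative_mul, map_add, map_add] at h
    rw [Function.iterate_succ_apply, ← ih]
    linarith

noncomputable def kernelCoeff (j : ℕ) : ℝ := (-1) ^ j / (2 ^ j * j !)

lemma kernelCoeff_succ_mul (j : ℕ) :
    kernelCoeff (j + 1) * (2 * (j + 1)) = -kernelCoeff j := by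
  simp only [kernelCoeff, pow_succ, Nat.factorial_succ]
  push_cast
  field_simp

/-- `kernelCoeff j = He_{2j}(0) / (2j)!` and `He_k(0) = 0` for odd `k`, so this is the
reproducing kernel `∑_{k ≤ 2R+1} He_k(0) He_k / k!` at `0` of the polynomials of degree
`≤ 2R + 1` in `L²(γ)`. -/
noncomputable def reproducingKernelZero (R : ℕ) : ℝ[X] :=
  ∑ j ∈ range (R + 1), C (kernelCoeff j) * hermiteReal (2 * j)

lemma natDegree_reproducingKernelZero_le (R : ℕ) :
    (reproducingKernelZero R).natDegree ≤ 2 * R := by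
  refine natDegree_sum_le_of_forall_le _ _ fun j hj => ?_
  refine (natDegree_C_mul_le _ _).trans ?_
  rw [natDegree_hermiteReal]
  simp only [mem_range] at hj
  omega

lemma gaussianExpectation_mul_reproducingKernelZero (p : ℝ[X]) (R : ℕ) :
    gaussianExpectation 0 1 (p * reproducingKernelZero R) =
      ∑ j ∈ range (R + 1), kernelCoeff j * gaussianExpectation 0 1 (derivative^[2 * j] p) := by
  simp only [reproducingKernelZero, mul_sum, map_sum, C_mul', mul_smul_comm, map_smul, smul_eq_mul,
    gaussianExpectation_mul_hermiteReal]

/- By Leibniz, `D^{2j} (q X) = X D^{2j} q + 2j D^{2j-1} q`; integration by parts turns the first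
term into `D^{2j+1} q`, and `2 (j+1) c_{j+1} = -c_j` makes the sum telescope. -/
lemma sum_kernelCoeff_mul_gaussianExpectation_iterate_derivative_mul_X (q : ℝ[X]) (N : ℕ) :
    ∑ j ∈ range (N + 1), kernelCoeff j * gaussianExpectation 0 1 (derivative^[2 * j] (q * X)) =
      kernelCoeff N * gaussianExpectation 0 1 (derivative^[2 * N + 1] q) := by
  induction N with
  | zero => simp [mul_comm q X, gaussianExpectation_X_mul]
  | succ N ih =>
    rw [sum_range_succ, ih, iterate_derivative_mul_X, map_add, map_nsmul, mul_comm _ X,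
      gaussianExpectation_X_mul, ← Function.iterate_succ_apply' derivative,
      Nat.succ_eq_add_one, show 2 * (N + 1) - 1 = 2 * N + 1 by omega, nsmul_eq_mul]
    push_cast
    linear_combination gaussianExpectation 0 1 (derivative^[2 * N + 1] q) * kernelCoeff_succ_mul N

theorem gaussianExpectation_mul_reproducingKernelZero_of_natDegree_le {p : ℝ[X]} {R : ℕ}
    (hp : p.natDegree ≤ 2 * R + 1) :
    gaussianExpectation 0 1 (p * reproducingKernelZero R) = p.eval 0 := by
  have hq : derivative^[2 * R + 1] (divX p) = 0 :=
    iterate_derivative_eq_zero (by rw [natDegree_divX_eq_natDegree_tsub_one]; omega)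
  rw [gaussianExpectation_mul_reproducingKernelZero, ← divX_mul_X_add p]
  simp only [iterate_map_add, map_add, mul_add, sum_add_distrib,
    sum_kernelCoeff_mul_gaussianExpectation_iterate_derivative_mul_X, hq, map_zero, mul_zero,
    zero_add]
  rw [sum_range_succ']
  simp [kernelCoeff, gaussianExpectation_C, coeff_zero_eq_eval_zero]

noncomputable def centralTerm (j : ℕ) : ℝ := (2 * j - 1)‼ / (2 ^ j * j !)

lemma centralTerm_pos (j : ℕ) : 0 < centralTerm j := by
  unfold centralTerm
  have := Nat.doubleFactorial_pos (2 * j - 1)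
  positivity

lemma centralTerm_succ (j : ℕ) :
    centralTerm (j + 1) = (2 * j + 1) / (2 * j + 2) * centralTerm j := by
  rw [centralTerm, centralTerm, show 2 * (j + 1) - 1 = 2 * j + 1 by omega,
    Nat.doubleFactorial_add_one, Nat.factorial_succ, pow_succ]
  push_cast
  field_simp

lemma sum_range_centralTerm (R : ℕ) :
    ∑ j ∈ range (R + 1), centralTerm j = (2 * R + 1) * centralTerm R := by
  induction R with
  | zero => simp
  | succ R ih =>
    rw [sum_range_succ, ih, centralTerm_succ]
    push_cast
    field_simp

lemma succ_mul_centralTerm_sq_le_one (R : ℕ) : (R + 1) * centralTerm R ^ 2 ≤ 1 := by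
  induction R with
  | zero => simp [centralTerm]
  | succ R ih =>
    have hratio : ((R : ℝ) + 1 + 1) * ((2 * R + 1) / (2 * R + 2)) ^ 2 ≤ R + 1 := by
      rw [div_pow, mul_div_assoc', div_le_iff₀ (by positivity)]
      nlinarith
    rw [centralTerm_succ]
    push_cast
    calc ((R : ℝ) + 1 + 1) * ((2 * R + 1) / (2 * R + 2) * centralTerm R) ^ 2
        = ((R : ℝ) + 1 + 1) * ((2 * R + 1) / (2 * R + 2)) ^ 2 * centralTerm R ^ 2 := by ring
      _ ≤ (R + 1) * centralTerm R ^ 2 := by gcongr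
      _ ≤ 1 := ih

lemma eval_zero_reproducingKernelZero (R : ℕ) :
    (reproducingKernelZero R).eval 0 = (2 * R + 1) * centralTerm R := by
  rw [← sum_range_centralTerm, reproducingKernelZero, eval_finsetSum]
  refine sum_congr rfl fun j _ => ?_
  rw [eval_mul, eval_C, eval_zero_hermiteReal_two_mul, kernelCoeff, centralTerm, ← mul_assoc,
    div_mul_eq_mul_div, ← pow_add, ← two_mul, pow_mul, neg_one_sq, one_pow, one_div_mul_eq_div]

lemma eval_zero_reproducingKernelZero_pos (R : ℕ) : 0 < (reproducingKernelZero R).eval 0 := by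
  rw [eval_zero_reproducingKernelZero]
  have := centralTerm_pos R
  positivity

lemma eval_zero_reproducingKernelZero_le (R : ℕ) :
    (reproducingKernelZero R).eval 0 ≤ 2 * √(R + 1) := by
  have hR : (0 : ℝ) ≤ R + 1 := by positivity
  rw [← pow_le_pow_iff_left₀ (eval_zero_reproducingKernelZero_pos R).le (by positivity)
    two_ne_zero, mul_pow, Real.sq_sqrt hR, eval_zero_reproducingKernelZero]
  have := succ_mul_centralTerm_sq_le_one R
  nlinarith

theorem sq_eval_zero_le_mul_gaussianExpectation_sq {p : ℝ[X]} {R : ℕ}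
    (hp : p.natDegree ≤ 2 * R + 1) :
    p.eval 0 ^ 2 ≤ (reproducingKernelZero R).eval 0 * gaussianExpectation 0 1 (p ^ 2) := by
  set K := reproducingKernelZero R
  have hk : 0 < K.eval 0 := eval_zero_reproducingKernelZero_pos R
  have hpK : gaussianExpectation 0 1 (p * K) = p.eval 0 :=
    gaussianExpectation_mul_reproducingKernelZero_of_natDegree_le hp
  have hKK : gaussianExpectation 0 1 (K * K) = K.eval 0 :=
    gaussianExpectation_mul_reproducingKernelZero_of_natDegree_le
      ((natDegree_reproducingKernelZero_le R).trans (Nat.le_succ _))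
  set t := p.eval 0 / K.eval 0
  have hexpand : (p - C t * K) ^ 2 = p ^ 2 - C (2 * t) * (p * K) + C (t ^ 2) * (K * K) := by
    simp only [map_mul, map_pow, C_ofNat]; ring
  have h := gaussianExpectation_sq_nonneg (μ := 0) (v := 1) (p - C t * K)
  rw [hexpand, map_add, map_sub, gaussianExpectation_C_mul, gaussianExpectation_C_mul, hpK,
    hKK] at h
  have ht : 2 * t * p.eval 0 - t ^ 2 * K.eval 0 = p.eval 0 ^ 2 / K.eval 0 := by
    simp only [t]; field_simp; ring
  rw [← div_le_iff₀' hk]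
  linarith

theorem stmt_9 :
    ∃ c : ℝ, 0 < c ∧
      ∀ d : ℕ, 1 ≤ d →
        ∀ p : Polynomial ℝ, p.natDegree ≤ d → p.eval 0 = 1 →
          c / Real.sqrt d ≤ ∫ x, (p.eval x) ^ 2 ∂(gaussianReal 0 1) := by
  refine ⟨1 / 2, by norm_num, fun d hd p hp hp0 => ?_⟩
  have hkey := sq_eval_zero_le_mul_gaussianExpectation_sq (R := d / 2) (p := p) (by omega)
  have hk := eval_zero_reproducingKernelZero_pos (d / 2)
  have hkd : (reproducingKernelZero (d / 2)).eval 0 ≤ 2 * √d :=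
    (eval_zero_reproducingKernelZero_le _).trans <| by
      gcongr
      exact_mod_cast (by omega : d / 2 + 1 ≤ d)
  rw [hp0, one_pow, gaussianExpectation_apply] at hkey
  simp only [eval_pow] at hkey
  rw [div_le_iff₀ (by positivity)]
  nlinarith
end

section
/- For every real L ≥ 0 and every integer d ≥ 1, ∫_L^∞ e^{−x²}·x^{2d} dx ≤ e^{−L²}·(L^{2d} + (8d)^d). -/
open MeasureTheory Real Set

/-! For `x ≥ L` put `M = max (L²) (8d)`. Then `x^(2d) ≤ (M + (x² - L²))^d ≤ M^d e^{(x² - L²)/8}` by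
`1 + u ≤ eᵘ` and `d / M ≤ 1/8`, while `M^d ≤ L^(2d) + (8d)^d`. So the integrand spends only an eighth
of its Gaussian weight and is at most `(L^(2d) + (8d)^d) e^{-L²/8} e^{-7x²/8}`. Since
`L² + (x - L)² ≤ x²`, the tail `∫_L^∞ e^{-bx²}` is at most `e^{-bL²} √(π/b)/2`, which is `≤ e^{-bL²}`
as soon as `b ≥ π/4`, in particular for `b = 7/8`. -/

lemma add_pow_le_pow_mul_exp {M s : ℝ} (hM : 0 < M) (hMs : 0 ≤ M + s) (d : ℕ) :
    (M + s) ^ d ≤ M ^ d * exp (d * s / M) := by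
  have hbase : M + s ≤ M * exp (s / M) := by
    have := mul_le_mul_of_nonneg_left (add_one_le_exp (s / M)) hM.le
    rwa [mul_add, mul_div_cancel₀ _ hM.ne', mul_one, add_comm s] at this
  calc (M + s) ^ d ≤ (M * exp (s / M)) ^ d := pow_le_pow_left₀ hMs hbase d
    _ = M ^ d * exp (d * s / M) := by rw [mul_pow, ← exp_nat_mul, mul_div_assoc]

lemma pow_two_mul_le_mul_exp {L x κ : ℝ} (hκ : 0 < κ) (hx : L ^ 2 ≤ x ^ 2) (d : ℕ) :
    x ^ (2 * d) ≤ (L ^ (2 * d) + (κ * d) ^ d) * exp ((x ^ 2 - L ^ 2) / κ) := by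
  rcases Nat.eq_zero_or_pos d with rfl | hd
  · simp only [mul_zero, pow_zero]
    nlinarith [one_le_exp (div_nonneg (sub_nonneg.2 hx) hκ.le)]
  set M := max (L ^ 2) (κ * d)
  have hκd : 0 < κ * d := mul_pos hκ (Nat.cast_pos.2 hd)
  have hM : 0 < M := lt_max_of_lt_right hκd
  have hMd : M ^ d ≤ L ^ (2 * d) + (κ * d) ^ d := by
    rw [pow_mul]
    rcases max_cases (L ^ 2) (κ * d) with ⟨h, -⟩ | ⟨h, -⟩ <;> simp only [M, h]
    · linarith [pow_nonneg hκd.le d]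
    · linarith [pow_nonneg (sq_nonneg L) d]
  have hexp : d * (x ^ 2 - L ^ 2) / M ≤ (x ^ 2 - L ^ 2) / κ := by
    rw [div_le_div_iff₀ hM hκ]
    nlinarith [le_max_right (L ^ 2) (κ * d)]
  calc x ^ (2 * d) = (x ^ 2) ^ d := pow_mul x 2 d
    _ ≤ (M + (x ^ 2 - L ^ 2)) ^ d :=
        pow_le_pow_left₀ (sq_nonneg x) (by linarith [le_max_left (L ^ 2) (κ * d)]) d
    _ ≤ M ^ d * exp (d * (x ^ 2 - L ^ 2) / M) := add_pow_le_pow_mul_exp hM (by linarith) d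
    _ ≤ (L ^ (2 * d) + (κ * d) ^ d) * exp ((x ^ 2 - L ^ 2) / κ) := by
        gcongr
        exact (pow_nonneg hM.le d).trans hMd

lemma integral_Ici_exp_neg_mul_sq_le {b L : ℝ} (hb : 0 < b) (hL : 0 ≤ L) :
    ∫ x in Ici L, exp (-b * x ^ 2) ≤ exp (-b * L ^ 2) * (√(π / b) / 2) := by
  have hshift : ∫ x in Ici L, exp (-b * (x - L) ^ 2) = √(π / b) / 2 := by
    rw [integral_Ici_eq_integral_Ioi, ← integral_gaussian_Ioi b]
    have := (measurePreserving_sub_right volume L).setIntegral_preimage_emb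
      (measurableEmbedding_subRight L) (fun t ↦ exp (-b * t ^ 2)) (Ioi 0)
    rwa [preimage_sub_const_Ioi, zero_add] at this
  calc ∫ x in Ici L, exp (-b * x ^ 2)
      ≤ ∫ x in Ici L, exp (-b * L ^ 2) * exp (-b * (x - L) ^ 2) := by
        refine setIntegral_mono_on (integrable_exp_neg_mul_sq hb).integrableOn
          (((integrable_exp_neg_mul_sq hb).comp_sub_right L).const_mul _).integrableOn
          measurableSet_Ici fun x hx ↦ ?_
        rw [← exp_add, exp_le_exp]
        nlinarith [mul_nonneg (mul_nonneg hb.le hL) (sub_nonneg.2 (mem_Ici.1 hx))]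
    _ = exp (-b * L ^ 2) * (√(π / b) / 2) := by rw [integral_const_mul, hshift]

lemma integral_Ici_exp_neg_mul_sq_le_exp {b L : ℝ} (hb : π / 4 ≤ b) (hL : 0 ≤ L) :
    ∫ x in Ici L, exp (-b * x ^ 2) ≤ exp (-b * L ^ 2) := by
  have hb0 : 0 < b := lt_of_lt_of_le (by positivity) hb
  refine (integral_Ici_exp_neg_mul_sq_le hb0 hL).trans (mul_le_of_le_one_right (exp_pos _).le ?_)
  rw [div_le_one two_pos, sqrt_le_left two_pos.le, div_le_iff₀ hb0]
  linarith

theorem stmt_13_general (L : ℝ) (hL : 0 ≤ L) (d : ℕ) :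
    ∫ x in Set.Ici L, Real.exp (-x ^ 2) * x ^ (2 * d) ≤
      Real.exp (-L ^ 2) * (L ^ (2 * d) + (8 * (d : ℝ)) ^ d) := by
  set K := L ^ (2 * d) + (8 * (d : ℝ)) ^ d
  have hpoint : ∀ x ∈ Ici L,
      exp (-x ^ 2) * x ^ (2 * d) ≤ K * exp (-L ^ 2 / 8) * exp (-(7 / 8) * x ^ 2) := by
    intro x hx
    calc exp (-x ^ 2) * x ^ (2 * d) ≤ exp (-x ^ 2) * (K * exp ((x ^ 2 - L ^ 2) / 8)) := by
          gcongr
          exact pow_two_mul_le_mul_exp (by norm_num) (pow_le_pow_left₀ hL (mem_Ici.1 hx) 2) d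
      _ = K * exp (-L ^ 2 / 8) * exp (-(7 / 8) * x ^ 2) := by
          rw [mul_left_comm, mul_assoc, ← exp_add, ← exp_add]; ring_nf
  calc ∫ x in Ici L, exp (-x ^ 2) * x ^ (2 * d)
      ≤ ∫ x in Ici L, K * exp (-L ^ 2 / 8) * exp (-(7 / 8) * x ^ 2) :=
        integral_mono_of_nonneg
          (ae_of_all _ fun x ↦ mul_nonneg (exp_pos _).le ((even_two_mul d).pow_nonneg x))
          ((integrable_exp_neg_mul_sq (by norm_num)).const_mul _).integrableOn
          ((ae_restrict_iff' measurableSet_Ici).2 (ae_of_all _ hpoint))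
    _ = K * exp (-L ^ 2 / 8) * ∫ x in Ici L, exp (-(7 / 8) * x ^ 2) := integral_const_mul _ _
    _ ≤ K * exp (-L ^ 2 / 8) * exp (-(7 / 8) * L ^ 2) := by
        gcongr
        exact integral_Ici_exp_neg_mul_sq_le_exp (by linarith [pi_lt_d2]) hL
    _ = exp (-L ^ 2) * K := by rw [mul_assoc, ← exp_add]; ring_nf

theorem stmt_13 (L : ℝ) (hL : 0 ≤ L) (d : ℕ) (hd : 1 ≤ d) :
    ∫ x in Set.Ici L, Real.exp (-x ^ 2) * x ^ (2 * d) ≤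
      Real.exp (-L ^ 2) * (L ^ (2 * d) + (8 * (d : ℝ)) ^ d) :=
  stmt_13_general L hL d
end

section
/- For every real k with 1 ≤ k ≤ 2, every real L ≥ 1, and every integer d ≥ 3, ∫_L^∞ exp(−x^{2/k})·x^{2d} dx ≤ exp(−L^{2/k})·(L^{4d} + (16·k·d)^{2kd}). -/
/-!
Put `p = 2 / k ≥ 1` and `m = k d ≥ d`, so that `x ^ (2 d) = (x ^ p) ^ m`, and split `[L, ∞)` at
`2 L`. On `[L, 2 L)` the integrand is at most `e^{-L^p} (2 L)^{2d}`. On `[2 L, ∞)` the elementary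
bound `t ^ m ≤ (4 m) ^ m e^{t / 4}` absorbs the polynomial factor into a quarter of `e^{-x^p}`, and
since there `x ^ p ≥ 2 L ^ p` and `x ^ p ≥ x`, the integrand is at most `e^{-L^p} (4 m)^m e^{-x/4}`.
Integrating gives `e^{-L^p} ((2 L)^{2d} L + 4 (4 m)^m)`. Finally `(2 L)^{2d} L ≤ L^{4d}` once
`L ≥ 4`, and otherwise `(2 L)^{2d} L ≤ 4 · 64^d`, which together with `4 (4 m)^m` fits under
`(16 m)^{2m}`.
-/

open MeasureTheory Real Set

lemma rpow_le_rpow_mul_exp {t c m : ℝ} (ht : 0 ≤ t) (hc : 0 < c) (hm : 0 ≤ m) :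
    t ^ m ≤ c ^ m * exp (m / c * t) := by
  have hle : t / c ≤ exp (t / c) := by linarith [add_one_le_exp (t / c)]
  calc t ^ m = c ^ m * (t / c) ^ m := by
        rw [div_rpow ht hc.le, mul_div_cancel₀ _ (rpow_pos_of_pos hc m).ne']
    _ ≤ c ^ m * exp (t / c) ^ m := by gcongr
    _ = c ^ m * exp (m / c * t) := by rw [← exp_mul]; ring_nf

lemma two_mul_rpow_le_rpow {L x p : ℝ} (hL : 0 ≤ L) (hp : 1 ≤ p) (hLx : 2 * L ≤ x) :
    2 * L ^ p ≤ x ^ p := by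
  calc 2 * L ^ p ≤ 2 ^ p * L ^ p := by
        gcongr; simpa using rpow_le_rpow_of_exponent_le one_le_two hp
    _ = (2 * L) ^ p := (mul_rpow zero_le_two hL).symm
    _ ≤ x ^ p := by gcongr

lemma exp_neg_rpow_mul_rpow_le {L x p m : ℝ} (hL : 0 ≤ L) (hx : 1 ≤ x) (hLx : 2 * L ≤ x)
    (hp : 1 ≤ p) (hm : 0 < m) :
    exp (-x ^ p) * (x ^ p) ^ m ≤ exp (-L ^ p) * (4 * m) ^ m * exp (-(1 / 4) * x) := by
  have hpoly : (x ^ p) ^ m ≤ (4 * m) ^ m * exp (x ^ p / 4) := by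
    have h := rpow_le_rpow_mul_exp (t := x ^ p) (by positivity) (by positivity : 0 < 4 * m) hm.le
    rwa [show m / (4 * m) * x ^ p = x ^ p / 4 by field_simp] at h
  have hL2 := two_mul_rpow_le_rpow hL hp hLx
  have hx_le := self_le_rpow_of_one_le hx hp
  calc exp (-x ^ p) * (x ^ p) ^ m ≤ exp (-x ^ p) * ((4 * m) ^ m * exp (x ^ p / 4)) := by
        gcongr
    _ = (4 * m) ^ m * exp (-x ^ p + x ^ p / 4) := by rw [exp_add]; ring
    _ ≤ (4 * m) ^ m * exp (-L ^ p + -(1 / 4) * x) := by gcongr _ * exp ?_; linarith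
    _ = exp (-L ^ p) * (4 * m) ^ m * exp (-(1 / 4) * x) := by rw [exp_add]; ring

lemma setIntegral_Ici_le_of_le_const_of_le_exp {f : ℝ → ℝ} {L a b c : ℝ} (hL : 0 ≤ L) (hc : 0 < c)
    (hf : Measurable f) (hf0 : ∀ x ∈ Ici L, 0 ≤ f x) (hnear : ∀ x ∈ Ico L (2 * L), f x ≤ a)
    (hfar : ∀ x ∈ Ici (2 * L), f x ≤ b * exp (-c * x)) :
    ∫ x in Ici L, f x ≤ a * L + b / c := by
  have hb : 0 ≤ b := nonneg_of_mul_nonneg_left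
    ((hf0 _ (mem_Ici.2 (by linarith))).trans (hfar _ self_mem_Ici)) (exp_pos _)
  have hexp : IntegrableOn (fun x => b * exp (-c * x)) (Ici (2 * L)) :=
    ((integrableOn_Ici_iff_integrableOn_Ioi).2
      (integrableOn_exp_mul_Ioi (neg_lt_zero.2 hc) _)).const_mul b
  have hint_near : IntegrableOn f (Ico L (2 * L)) := by
    refine Measure.integrableOn_of_bounded (M := a) measure_Ico_lt_top.ne hf.aestronglyMeasurable
      ((ae_restrict_iff' measurableSet_Ico).2 (ae_of_all _ fun x hx => ?_))
    rw [norm_of_nonneg (hf0 x hx.1)]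
    exact hnear x hx
  have hint_far : IntegrableOn f (Ici (2 * L)) := by
    refine hexp.mono' hf.aestronglyMeasurable.restrict
      ((ae_restrict_iff' measurableSet_Ici).2 (ae_of_all _ fun x hx => ?_))
    rw [norm_of_nonneg (hf0 x (mem_Ici.2 (by linarith [mem_Ici.1 hx])))]
    exact hfar x hx
  rw [← Ico_union_Ici_eq_Ici (by linarith : L ≤ 2 * L), setIntegral_union
    ((Iio_disjoint_Ici le_rfl).mono_left Ico_subset_Iio_self) measurableSet_Ici hint_near hint_far]
  have h_near : ∫ x in Ico L (2 * L), f x ≤ a * L := by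
    calc ∫ x in Ico L (2 * L), f x ≤ ∫ _ in Ico L (2 * L), a :=
          setIntegral_mono_on hint_near (integrableOn_const measure_Ico_lt_top.ne)
            measurableSet_Ico hnear
      _ = a * L := by
          rw [setIntegral_const, Real.volume_real_Ico_of_le (by linarith), smul_eq_mul]; ring
  have h_far : ∫ x in Ici (2 * L), f x ≤ b / c := by
    calc ∫ x in Ici (2 * L), f x ≤ ∫ x in Ici (2 * L), b * exp (-c * x) :=
          setIntegral_mono_on hint_far hexp measurableSet_Ici hfar
      _ = b * (exp (-c * (2 * L)) / c) := by
          rw [integral_const_mul, integral_Ici_eq_integral_Ioi, integral_exp_mul_Ioi (by linarith)]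
          ring
      _ ≤ b * (1 / c) := by
          gcongr
          exact exp_le_one_iff.2 (by nlinarith)
      _ = b / c := mul_one_div b c
  linarith

lemma two_mul_pow_mul_le {L : ℝ} {d : ℕ} (hL : 1 ≤ L) (hd : 1 ≤ d) :
    (2 * L) ^ (2 * d) * L ≤ L ^ (4 * d) + 4 * 64 ^ d := by
  rcases le_total 4 L with h4 | h4
  · have hlarge : (2 * L) ^ (2 * d) * L ≤ L ^ (4 * d) :=
      calc (2 * L) ^ (2 * d) * L = 4 ^ d * L ^ (2 * d + 1) := by
            rw [mul_pow, pow_mul]; ring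
        _ ≤ L ^ d * L ^ (2 * d + 1) := by
            gcongr ?_ * _
            exact pow_le_pow_left₀ (by norm_num) h4 d
        _ = L ^ (3 * d + 1) := by ring
        _ ≤ L ^ (4 * d) := pow_le_pow_right₀ hL (by omega)
    linarith [pow_nonneg (show (0:ℝ) ≤ 64 by norm_num) d]
  · have hsmall : (2 * L) ^ (2 * d) * L ≤ 4 * 64 ^ d :=
      calc (2 * L) ^ (2 * d) * L ≤ 8 ^ (2 * d) * 4 := by
            gcongr ?_ ^ _ * ?_
            linarith
        _ = 4 * 64 ^ d := by rw [pow_mul]; ring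
    linarith [pow_nonneg (show (0:ℝ) ≤ L by linarith) (4 * d)]

lemma four_mul_pow_add_le {m : ℝ} {d : ℕ} (hd : 2 ≤ d) (hdm : (d : ℝ) ≤ m) :
    4 * 64 ^ d + 4 * (4 * m) ^ m ≤ (16 * m) ^ (2 * m) := by
  have hd' : (2 : ℝ) ≤ d := by exact_mod_cast hd
  obtain ⟨C, hC⟩ : ∃ C, (16 * m) ^ m = C := ⟨_, rfl⟩
  have hCC : (16 * m) ^ (2 * m) = C * C := by
    rw [← hC, ← rpow_add (by linarith), two_mul]
  have hAC : 4 * (4 * m) ^ m ≤ C := by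
    have h4 : (4 : ℝ) ≤ 4 ^ m := by
      simpa using rpow_le_rpow_of_exponent_le (by norm_num : (1 : ℝ) ≤ 4) (by linarith : 1 ≤ m)
    calc 4 * (4 * m) ^ m ≤ 4 ^ m * (4 * m) ^ m :=
          mul_le_mul_of_nonneg_right h4 (rpow_nonneg (by linarith) _)
      _ = C := by rw [← hC, ← mul_rpow (by norm_num) (by linarith)]; ring_nf
  have hC32 : (32 : ℝ) ^ d ≤ C :=
    calc (32 : ℝ) ^ d = 32 ^ (d : ℝ) := (rpow_natCast 32 d).symm
      _ ≤ 32 ^ m := rpow_le_rpow_of_exponent_le (by norm_num) hdm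
      _ ≤ C := hC ▸ rpow_le_rpow (by norm_num) (by linarith) (by linarith)
  have h64 : 8 * 64 ^ d ≤ (32 : ℝ) ^ d * 32 ^ d :=
    calc 8 * 64 ^ d ≤ (16 : ℝ) ^ d * 64 ^ d := by
          gcongr; exact le_trans (by norm_num) (pow_le_pow_right₀ (by norm_num) hd)
      _ = (32 : ℝ) ^ d * 32 ^ d := by rw [← mul_pow, ← mul_pow]; norm_num
  have h2C : 2 * C ≤ C * C := by
    have : (32 : ℝ) ≤ 32 ^ d := le_self_pow₀ (by norm_num) (by omega)
    nlinarith
  have hCsq : (32 : ℝ) ^ d * 32 ^ d ≤ C * C := mul_self_le_mul_self (by positivity) hC32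
  linarith

theorem stmt_14 (k : ℝ) (hk1 : 1 ≤ k) (hk2 : k ≤ 2) (L : ℝ) (hL : 1 ≤ L)
    (d : ℕ) (hd : 3 ≤ d) :
    ∫ x in Set.Ici L, Real.exp (-(x ^ (2 / k))) * x ^ (2 * d) ≤
      Real.exp (-(L ^ (2 / k))) * (L ^ (4 * d) + (16 * k * (d : ℝ)) ^ (2 * k * (d : ℝ))) := by
  have hk0 : 0 < k := by linarith
  have hd' : (3 : ℝ) ≤ d := by exact_mod_cast hd
  have hL0 : 0 ≤ L := by linarith
  set p := 2 / k with hp_def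
  set m := k * d with hm_def
  have hp : 1 ≤ p := by rw [hp_def, le_div_iff₀ hk0]; linarith
  have hdm : (d : ℝ) ≤ m := by nlinarith
  have hpow (x : ℝ) (hx : 0 ≤ x) : x ^ (2 * d) = (x ^ p) ^ m := by
    rw [← rpow_mul hx, show p * m = ((2 * d : ℕ) : ℝ) by rw [hp_def, hm_def]; push_cast; field_simp,
      rpow_natCast]
  have hnear : ∀ x ∈ Ico L (2 * L),
      exp (-x ^ p) * x ^ (2 * d) ≤ exp (-L ^ p) * (2 * L) ^ (2 * d) := fun x hx => by
    have hx0 : 0 ≤ x := hL0.trans hx.1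
    gcongr
    exacts [hx.1, hx.2.le]
  have hfar : ∀ x ∈ Ici (2 * L),
      exp (-x ^ p) * x ^ (2 * d) ≤ exp (-L ^ p) * (4 * m) ^ m * exp (-(1 / 4) * x) :=
    fun x hx => by
      rw [hpow x (by linarith [mem_Ici.1 hx])]
      exact exp_neg_rpow_mul_rpow_le hL0 (by linarith [mem_Ici.1 hx]) hx hp (by linarith)
  calc _ ≤ exp (-L ^ p) * (2 * L) ^ (2 * d) * L + exp (-L ^ p) * (4 * m) ^ m / (1 / 4) :=
        setIntegral_Ici_le_of_le_const_of_le_exp hL0 (by norm_num) (by fun_prop)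
          (fun x hx => mul_nonneg (exp_pos _).le (pow_nonneg (hL0.trans hx) _)) hnear hfar
    _ = exp (-L ^ p) * ((2 * L) ^ (2 * d) * L + 4 * (4 * m) ^ m) := by ring
    _ ≤ exp (-L ^ p) * (L ^ (4 * d) + (16 * m) ^ (2 * m)) := by
        gcongr _ * ?_
        linarith [two_mul_pow_mul_le hL (by omega : 1 ≤ d), four_mul_pow_add_le (by omega) hdm]
    _ = _ := by rw [hm_def, ← mul_assoc, ← mul_assoc]
end

section
/- Let n ≥ 1 and 1 ≤ m ≤ n be integers, let I ⊆ {1, …, n} with |I| = m, and let u ∈ ℝⁿ satisfy u_i ≥ 0 for all i and ∑_{i=1}^n u_i = 1. Suppose ∑_{i∈I} u_i < m/n. Define v ∈ ℝⁿ by v_i = 1/m for i ∈ I and v_i = 0 otherwise. Then there exists λ ∈ (0, 1] such that ‖(1−λ)·u + λ·v‖₂ < ‖u‖₂. -/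
/-! Along the segment from `u` to `v` the squared norm `‖u + t (v - u)‖²` has derivative
`2 ⟪u, v - u⟫` at `t = 0`, so the norm decreases initially as soon as `⟪u, v⟫ < ‖u‖²`.
Here `⟪u, v⟫ = (∑_{i ∈ I} u_i) / m < 1 / n`, while Cauchy–Schwarz gives `1 / n ≤ ‖u‖²` for any
`u` with coordinate sum `1`. -/

open RealInnerProductSpace

theorem exists_norm_convex_comb_lt_of_inner_lt_norm_sq {E : Type*} [NormedAddCommGroup E]
    [InnerProductSpace ℝ E] {u v : E} (h : ⟪u, v⟫ < ‖u‖ ^ 2) :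
    ∃ t : ℝ, 0 < t ∧ t ≤ 1 ∧ ‖(1 - t) • u + t • v‖ < ‖u‖ := by
  have hc : ⟪u, v - u⟫ < 0 := by
    rw [inner_sub_right, real_inner_self_eq_norm_sq]
    linarith
  set c := ⟪u, v - u⟫
  set d := ‖v - u‖ ^ 2
  have hd : 0 < d := by
    refine pow_pos (norm_pos_iff.mpr fun hvu => ?_) 2
    simp [c, hvu] at hc
  -- `t = -c / d` minimises the quadratic `‖u‖² + 2 t c + t² d`; cap it at `1`.
  set t := min 1 (-c / d)
  have ht : 0 < t := lt_min one_pos (div_pos (neg_pos.mpr hc) hd)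
  have htd : t * d ≤ -c := (le_div_iff₀ hd).mp (min_le_right _ _)
  refine ⟨t, ht, min_le_left _ _, ?_⟩
  have hsegment : (1 - t) • u + t • v = u + t • (v - u) := by
    rw [sub_smul, smul_sub, one_smul]
    abel
  rw [hsegment]
  refine lt_of_pow_lt_pow_left₀ 2 (norm_nonneg _) ?_
  calc ‖u + t • (v - u)‖ ^ 2 = ‖u‖ ^ 2 + 2 * (t * c) + t * (t * d) := by
        rw [norm_add_sq_real, real_inner_smul_right, norm_smul, mul_pow, Real.norm_eq_abs, sq_abs]
        ring
    _ ≤ ‖u‖ ^ 2 + 2 * (t * c) + t * -c := by gcongr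
    _ = ‖u‖ ^ 2 + t * c := by ring
    _ < ‖u‖ ^ 2 := by linarith [mul_neg_of_pos_of_neg ht hc]

theorem EuclideanSpace.one_div_card_le_norm_sq_of_sum_eq_one {ι : Type*} [Fintype ι]
    {u : EuclideanSpace ℝ ι} (hu : ∑ i, u i = 1) : 1 / (Fintype.card ι : ℝ) ≤ ‖u‖ ^ 2 := by
  have hcs := sq_sum_le_card_mul_sum_sq (s := Finset.univ) (f := fun i => u i)
  rw [hu, Finset.card_univ, one_pow] at hcs
  have hcard : (0 : ℝ) < Fintype.card ι :=
    Nat.cast_pos.mpr (Fintype.card_pos_iff.mpr (Finset.univ_nonempty_iff.mp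
      (Finset.nonempty_of_sum_ne_zero (hu.symm ▸ one_ne_zero))))
  rw [EuclideanSpace.norm_sq_eq, div_le_iff₀ hcard]
  simpa only [Real.norm_eq_abs, sq_abs, mul_comm] using hcs

theorem EuclideanSpace.inner_eq_mul_sum_of_eq_ite {ι : Type*} [Fintype ι] [DecidableEq ι]
    {I : Finset ι} {c : ℝ} (u : EuclideanSpace ℝ ι) {v : EuclideanSpace ℝ ι}
    (hv : ∀ i, v i = if i ∈ I then c else 0) : ⟪u, v⟫ = c * ∑ i ∈ I, u i := by
  simp only [PiLp.inner_apply, RCLike.inner_apply, conj_trivial, hv, ite_mul, zero_mul,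
    Finset.sum_ite_mem, Finset.univ_inter, Finset.mul_sum]

theorem stmt_15_general (n m : ℕ) (hm1 : 1 ≤ m)
    (I : Finset (Fin n))
    (u : EuclideanSpace ℝ (Fin n)) (hu1 : ∑ i, u i = 1)
    (hlt : ∑ i ∈ I, u i < (m : ℝ) / n)
    (v : EuclideanSpace ℝ (Fin n)) (hv : ∀ i, v i = if i ∈ I then 1 / (m : ℝ) else 0) :
    ∃ lam : ℝ, 0 < lam ∧ lam ≤ 1 ∧ ‖(1 - lam) • u + lam • v‖ < ‖u‖ := by
  have hm : (0 : ℝ) < m := Nat.cast_pos.mpr hm1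
  refine exists_norm_convex_comb_lt_of_inner_lt_norm_sq ?_
  calc ⟪u, v⟫ = 1 / m * ∑ i ∈ I, u i := EuclideanSpace.inner_eq_mul_sum_of_eq_ite u hv
    _ < 1 / m * (m / n) := mul_lt_mul_of_pos_left hlt (one_div_pos.mpr hm)
    _ = 1 / n := by field_simp
    _ ≤ ‖u‖ ^ 2 := by
      simpa using EuclideanSpace.one_div_card_le_norm_sq_of_sum_eq_one hu1

theorem stmt_15 (n m : ℕ) (hn : 1 ≤ n) (hm1 : 1 ≤ m) (hmn : m ≤ n)
    (I : Finset (Fin n)) (hIcard : I.card = m)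
    (u : EuclideanSpace ℝ (Fin n)) (hu0 : ∀ i, 0 ≤ u i) (hu1 : ∑ i, u i = 1)
    (hlt : ∑ i ∈ I, u i < (m : ℝ) / n)
    (v : EuclideanSpace ℝ (Fin n)) (hv : ∀ i, v i = if i ∈ I then 1 / (m : ℝ) else 0) :
    ∃ lam : ℝ, 0 < lam ∧ lam ≤ 1 ∧ ‖(1 - lam) • u + lam • v‖ < ‖u‖ :=
  stmt_15_general n m hm1 I u hu1 hlt v hv
end

section
/- There exists a constant c > 0 such that for every integer d ≥ 1 the following holds. Let E = {(e_i, s/√d) : i ∈ {1, …, d}, s ∈ {−1, 1}} ⊆ ℝ^d × ℝ be a collection of 2d linear equations, where e_i is the i-th standard basis vector of ℝ^d. Then there exists a finite set T ⊆ ℝ^d with every coordinate of every a ∈ T in {−1/√d, 1/√d} (so every a ∈ T is a unit vector), |T| ≥ e^{c·d}, ‖u − v‖₂ ≥ 1/10 for all distinct u, v ∈ T, and for every a ∈ T one has |{(x, y) ∈ E : y = ⟨x, a⟩}| = d; i.e., every a ∈ T exactly satisfies half of the 2d equations in E. -/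
/-!
Take the sign vectors `a = (±1/√d, …, ±1/√d)`. Each is a unit vector, satisfies exactly one
of the two equations `⟨e_i, a⟩ = ±1/√d` for every `i`, and `‖a - a'‖² = 4 δ(a, a') / d` where
`δ` is the Hamming distance of the sign patterns. So it suffices to find `e^{cd}` sign patterns
at pairwise Hamming distance `> d/400`. A maximal such family (Gilbert–Varshamov) has Hamming
balls of radius `r = ⌊d/400⌋` around its members covering `{0,1}^d`, and such a ball has at most
`∑_{j ≤ r} C(d,j) ≤ 3^d / 2^(d-r)` points, whence the family has at least `(4/3)^d / 2^r` members.
-/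

open scoped Classical

open Finset

lemma exists_pairwise_not_rel_card_le_mul {α : Type*} [Fintype α] (R : α → α → Prop)
    [DecidableRel R] (hR : ∀ a, R a a) (hRs : ∀ a b, R a b → R b a) (B : ℕ)
    (hB : ∀ a, #{x | R a x} ≤ B) :
    ∃ A : Finset α, (A : Set α).Pairwise (fun u v => ¬ R u v) ∧ Fintype.card α ≤ #A * B := by
  obtain ⟨A, hA, hmax⟩ :=
    (univ.filter fun A : Finset α => (A : Set α).Pairwise (fun u v => ¬ R u v)).exists_max_image
      card ⟨∅, by simp⟩
  rw [mem_filter] at hA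
  refine ⟨A, hA.2, ?_⟩
  have hcover : ∀ x, ∃ a ∈ A, R a x := by
    by_contra! h
    obtain ⟨x, hx⟩ := h
    have hxA : x ∉ A := fun hxA => hx x hxA (hR x)
    have hins : (insert x A : Set α).Pairwise (fun u v => ¬ R u v) :=
      hA.2.insert fun a ha _ => ⟨fun h => hx a ha (hRs _ _ h), hx a ha⟩
    have := hmax (insert x A) (by simpa using hins)
    rw [card_insert_of_notMem hxA] at this
    omega
  calc Fintype.card α = #(univ : Finset α) := rfl
    _ ≤ #(A.biUnion fun a => {x | R a x}) := card_le_card fun x _ => by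
        obtain ⟨a, ha, hax⟩ := hcover x
        exact mem_biUnion.2 ⟨a, ha, by simpa using hax⟩
    _ ≤ #A * B := card_biUnion_le_card_mul _ _ _ fun a _ => hB a

lemma card_hammingDist_le_le_sum_choose {ι : Type*} [Fintype ι] [DecidableEq ι]
    (x : ι → Bool) (r : ℕ) :
    #{y | hammingDist x y ≤ r} ≤ ∑ j ∈ range (r + 1), (Fintype.card ι).choose j := by
  let flipOn (S : Finset ι) : ι → Bool := fun i => if i ∈ S then !x i else x i
  calc #{y | hammingDist x y ≤ r}
      ≤ #((range (r + 1)).biUnion fun j => (powersetCard j univ).image flipOn) := by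
        refine card_le_card fun y hy => ?_
        rw [mem_filter] at hy
        refine mem_biUnion.2 ⟨_, mem_range.2 (Nat.lt_succ_of_le hy.2),
          mem_image.2 ⟨univ.filter fun i => x i ≠ y i, mem_powersetCard_univ.2 rfl, ?_⟩⟩
        funext i
        cases hx : x i <;> cases hy : y i <;> simp [flipOn, hx, hy]
    _ ≤ ∑ j ∈ range (r + 1), #((powersetCard j (univ : Finset ι)).image flipOn) :=
        card_biUnion_le
    _ ≤ ∑ j ∈ range (r + 1), (Fintype.card ι).choose j := sum_le_sum fun j _ =>
        card_image_le.trans (card_powersetCard j univ).le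

lemma two_pow_sub_mul_sum_choose_le {n r : ℕ} (hr : r ≤ n) :
    2 ^ (n - r) * ∑ j ∈ range (r + 1), n.choose j ≤ 3 ^ n := by
  have h3 : 3 ^ n = ∑ j ∈ range (n + 1), 1 ^ j * 2 ^ (n - j) * n.choose j := by
    rw [show (3 : ℕ) = 1 + 2 from rfl, add_pow]; simp only [Nat.cast_id]
  rw [h3, mul_sum]
  calc ∑ j ∈ range (r + 1), 2 ^ (n - r) * n.choose j
      ≤ ∑ j ∈ range (r + 1), 1 ^ j * 2 ^ (n - j) * n.choose j := sum_le_sum fun j hj => by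
        rw [one_pow, one_mul]
        exact Nat.mul_le_mul_right _ (Nat.pow_le_pow_right two_pos (by grind))
    _ ≤ _ := sum_le_sum_of_subset (range_subset_range.2 (by omega))

lemma exists_pairwise_lt_hammingDist_four_pow_le (n r : ℕ) (hr : r ≤ n) :
    ∃ A : Finset (Fin n → Bool),
      (A : Set (Fin n → Bool)).Pairwise (fun u v => r < hammingDist u v) ∧
      4 ^ n ≤ #A * 3 ^ n * 2 ^ r := by
  obtain ⟨A, hA, hcard⟩ := exists_pairwise_not_rel_card_le_mul
    (fun u v : Fin n → Bool => hammingDist u v ≤ r) (fun u => by simp)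
    (fun u v h => by rwa [hammingDist_comm] at h) _
    (fun x => card_hammingDist_le_le_sum_choose x r)
  refine ⟨A, hA.mono' fun u v h => not_le.1 h, ?_⟩
  simp only [Fintype.card_fun, Fintype.card_bool, Fintype.card_fin] at hcard
  calc 4 ^ n = 2 ^ n * 2 ^ (n - r) * 2 ^ r := by
        rw [mul_assoc, ← pow_add, Nat.sub_add_cancel hr, ← mul_pow]; norm_num
    _ ≤ #A * (∑ j ∈ range (r + 1), n.choose j) * 2 ^ (n - r) * 2 ^ r := by gcongr
    _ = #A * (2 ^ (n - r) * ∑ j ∈ range (r + 1), n.choose j) * 2 ^ r := by ring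
    _ ≤ #A * 3 ^ n * 2 ^ r := by gcongr; exact two_pow_sub_mul_sum_choose_le hr

lemma exp_le_of_four_pow_le {n r N : ℕ} (hr : 400 * r ≤ n) (h : 4 ^ n ≤ N * 3 ^ n * 2 ^ r) :
    Real.exp (1 / 100 * n) ≤ N := by
  have hlog : (1 / 4 : ℝ) ≤ Real.log (4 / 3) := by
    have := Real.one_sub_inv_le_log_of_pos (by norm_num : (0 : ℝ) < 4 / 3)
    norm_num at this ⊢
    linarith
  have h2r : (2 : ℝ) ^ r ≤ Real.exp (n / 400) := calc
    (2 : ℝ) ^ r ≤ Real.exp 1 ^ r := by gcongr; linarith [Real.exp_one_gt_d9]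
    _ = Real.exp r := by rw [← Real.exp_nat_mul, mul_one]
    _ ≤ Real.exp (n / 400) := Real.exp_le_exp.2 <| by
      rw [le_div_iff₀ (by norm_num)]; exact_mod_cast (by omega : r * 400 ≤ n)
  have h43 : Real.exp (1 / 100 * n) * Real.exp (n / 400) ≤ (4 / 3 : ℝ) ^ n := calc
    _ = Real.exp (n * (1 / 80)) := by rw [← Real.exp_add]; ring_nf
    _ ≤ Real.exp (n * Real.log (4 / 3)) := by gcongr; linarith
    _ = (4 / 3 : ℝ) ^ n := by rw [Real.exp_nat_mul, Real.exp_log (by norm_num)]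
  refine le_of_mul_le_mul_right ?_ (by positivity : (0 : ℝ) < 3 ^ n * 2 ^ r)
  calc Real.exp (1 / 100 * n) * (3 ^ n * 2 ^ r)
      ≤ Real.exp (1 / 100 * n) * (3 ^ n * Real.exp (n / 400)) := by gcongr
    _ = Real.exp (1 / 100 * n) * Real.exp (n / 400) * 3 ^ n := by ring
    _ ≤ (4 / 3) ^ n * 3 ^ n := by gcongr
    _ = 4 ^ n := by rw [← mul_pow]; norm_num
    _ ≤ N * (3 ^ n * 2 ^ r) := by rw [← mul_assoc]; exact_mod_cast h

noncomputable def signVec {ι : Type*} (c : ℝ) (b : ι → Bool) : EuclideanSpace ℝ ι :=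
  WithLp.toLp 2 fun i => if b i then c else -c

section signVec

variable {ι : Type*} {c : ℝ}

@[simp]
lemma signVec_apply (b : ι → Bool) (i : ι) : signVec c b i = if b i then c else -c := rfl

lemma signVec_injective (hc : c ≠ 0) : Function.Injective (signVec (ι := ι) c) := by
  intro b b' h
  funext i
  have hi : (if b i then c else -c) = if b' i then c else -c := congrArg (· i) h
  cases hb : b i <;> cases hb' : b' i <;>
    simp only [hb, hb', if_true, if_false, Bool.false_eq_true] at hi <;>
    first | rfl | exact absurd (by linarith) hc

variable [Fintype ι]

lemma norm_signVec_sq (b : ι → Bool) : ‖signVec c b‖ ^ 2 = Fintype.card ι * c ^ 2 := by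
  simp [EuclideanSpace.norm_sq_eq, apply_ite]

lemma norm_signVec_sub_sq (b b' : ι → Bool) :
    ‖signVec c b - signVec c b'‖ ^ 2 = 4 * c ^ 2 * hammingDist b b' := by
  have hi : ∀ i, ‖(signVec c b - signVec c b') i‖ ^ 2 =
      if b i ≠ b' i then 4 * c ^ 2 else 0 := by
    intro i
    cases hb : b i <;> cases hb' : b' i <;> simp [hb, hb'] <;> ring
  rw [EuclideanSpace.norm_sq_eq, Finset.sum_congr rfl fun i _ => hi i, Finset.sum_ite,
    sum_const, sum_const_zero, add_zero, nsmul_eq_mul, hammingDist, mul_comm]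

end signVec

lemma card_filter_inner_eq_card {ι : Type*} [Fintype ι] [DecidableEq ι]
    (E : Finset (EuclideanSpace ℝ ι × ℝ)) (a : EuclideanSpace ℝ ι)
    (hE : ∀ e ∈ E, ∃ i, e.1 = EuclideanSpace.single i 1)
    (ha : ∀ i, (EuclideanSpace.single i 1, a i) ∈ E) :
    #(E.filter fun e => e.2 = inner ℝ e.1 a) = Fintype.card ι := by
  have hsat : E.filter (fun e => e.2 = inner ℝ e.1 a) =
      univ.image fun i => (EuclideanSpace.single i 1, a i) := by
    ext ⟨x, y⟩
    simp only [mem_filter, mem_image, mem_univ, true_and]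
    constructor
    · rintro ⟨hxy, rfl⟩
      obtain ⟨i, rfl⟩ := hE _ hxy
      exact ⟨i, by simp [EuclideanSpace.inner_single_left]⟩
    · rintro ⟨i, hi⟩
      obtain ⟨rfl, rfl⟩ := Prod.ext_iff.1 hi
      exact ⟨ha i, by simp [EuclideanSpace.inner_single_left]⟩
  rw [hsat, card_image_of_injective _ fun i j hij => ?_, card_univ]
  simpa using congrArg (fun e => e.1 i) hij

lemma signVec_apply_eq_neg_or_eq {ι : Type*} (c : ℝ) (b : ι → Bool) (i : ι) :
    signVec c b i = -c ∨ signVec c b i = c := by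
  rw [signVec_apply]
  cases b i
  exacts [Or.inl rfl, Or.inr rfl]

lemma one_div_ten_le_norm_signVec_sub {d : ℕ} {b b' : Fin d → Bool}
    (h : d / 400 < hammingDist b b') :
    1 / 10 ≤ ‖signVec (1 / Real.sqrt d) b - signVec (1 / Real.sqrt d) b'‖ := by
  have hdist : (d : ℝ) / 400 ≤ hammingDist b b' := by
    rw [div_le_iff₀ (by norm_num)]
    exact_mod_cast (by omega : d ≤ hammingDist b b' * 400)
  have hc2 : (1 / Real.sqrt d) ^ 2 = 1 / d := by rw [div_pow, Real.sq_sqrt d.cast_nonneg, one_pow]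
  rw [← sq_le_sq₀ (by norm_num) (norm_nonneg _), norm_signVec_sub_sq, hc2]
  rcases d.eq_zero_or_pos with rfl | hd
  · simp [Subsingleton.elim b b'] at h
  calc (1 / 10 : ℝ) ^ 2 = 4 * (1 / d) * (d / 400) := by field_simp; norm_num
    _ ≤ 4 * (1 / d) * hammingDist b b' := by gcongr

lemma card_filter_inner_signVec_eq {d : ℕ} (E : Finset (EuclideanSpace ℝ (Fin d) × ℝ))
    (hE : ∀ e : EuclideanSpace ℝ (Fin d) × ℝ,
      e ∈ E ↔ ∃ (i : Fin d) (s : ℝ), (s = -1 ∨ s = 1) ∧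
        e = (EuclideanSpace.single i (1 : ℝ), s / Real.sqrt d))
    (b : Fin d → Bool) :
    #(E.filter fun e => e.2 = inner ℝ e.1 (signVec (1 / Real.sqrt d) b)) = d := by
  refine (card_filter_inner_eq_card E _ (fun e he => ?_) fun i => ?_).trans (Fintype.card_fin d)
  · obtain ⟨i, s, -, rfl⟩ := (hE e).1 he
    exact ⟨i, rfl⟩
  · rw [hE]
    rcases signVec_apply_eq_neg_or_eq (1 / Real.sqrt d) b i with h | h <;> rw [h]
    · exact ⟨i, -1, Or.inl rfl, by rw [neg_div]⟩
    · exact ⟨i, 1, Or.inr rfl, rfl⟩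

theorem stmt_18 :
    ∃ c : ℝ, 0 < c ∧
      ∀ d : ℕ, 1 ≤ d →
        ∀ E : Finset (EuclideanSpace ℝ (Fin d) × ℝ),
          (∀ e : EuclideanSpace ℝ (Fin d) × ℝ,
            e ∈ E ↔ ∃ (i : Fin d) (s : ℝ), (s = -1 ∨ s = 1) ∧
              e = (EuclideanSpace.single i (1 : ℝ), s / Real.sqrt d)) →
          ∃ T : Finset (EuclideanSpace ℝ (Fin d)),
            (∀ a ∈ T, ∀ i : Fin d, a i = -(1 / Real.sqrt d) ∨ a i = 1 / Real.sqrt d) ∧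
            (∀ a ∈ T, ‖a‖ = 1) ∧
            Real.exp (c * d) ≤ (T.card : ℝ) ∧
            (∀ u ∈ T, ∀ v ∈ T, u ≠ v → 1 / 10 ≤ ‖u - v‖) ∧
            (∀ a ∈ T, (E.filter (fun e => e.2 = (inner ℝ e.1 a : ℝ))).card = d) := by
  refine ⟨1 / 100, by norm_num, fun d hd E hE => ?_⟩
  set c := 1 / Real.sqrt d
  obtain ⟨A, hA_sep, hA_card⟩ :=
    exists_pairwise_lt_hammingDist_four_pow_le d (d / 400) (Nat.div_le_self d 400)
  refine ⟨A.image (signVec c), forall_mem_image.2 fun b _ => signVec_apply_eq_neg_or_eq c b,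
    forall_mem_image.2 fun b _ => ?_, ?_,
    forall_mem_image.2 fun b hb => forall_mem_image.2 fun b' hb' hne =>
      one_div_ten_le_norm_signVec_sub (hA_sep hb hb' fun h => hne (h ▸ rfl)),
    forall_mem_image.2 fun b _ => card_filter_inner_signVec_eq E hE b⟩
  · rw [← pow_eq_one_iff_of_nonneg (norm_nonneg _) two_ne_zero, norm_signVec_sq, div_pow,
      Real.sq_sqrt d.cast_nonneg, Fintype.card_fin, one_pow, mul_one_div_cancel (by positivity)]
  · rw [card_image_of_injective _ (signVec_injective (by positivity))]
    exact exp_le_of_four_pow_le (Nat.mul_div_le d 400) hA_card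
end
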